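/- arXiv:0712.1639 — 5 statements merged into one kernel-verified Lean document; each statement's English description precedes it below -/
import Mathlib

section
/- Let χ^{(2)}_1 be the principal Dirichlet character modulo 2 (χ^{(2)}_1(n) = 1 for odd n and 0 for even n) and let k ≥ 1, d ≥ 1 be integers. Then for each ω ∈ {•,★}, L^ω_d({2k}^d; {χ^{(2)}_1}^d) = (-1)^{kd} · [ Σ_{μ ⊢ d} (ε^ω_μ / z_μ) · ( (-1)^{ℓ(μ)} ∏_{j=1}^{ℓ(μ)} (2^{2kμ_j} - 1) / 2^{ℓ(μ)} ) · ∏_{j=1}^{ℓ(μ)} B_{2kμ_j}/(2kμ_j)! ] · π^{2kd}. -/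
open Complex Filter Finset Topology

noncomputable section

/-- Generalized Bernoulli numbers `B_{n,χ}`, defined via the generating function
`∑_{a=1}^{N} χ(a) t e^{at}/(e^{Nt}-1) = ∑_{n≥0} B_{n,χ} t^n/n!`.
Formally, `t e^{at}/(e^{Nt}-1) = e^{at} * g⁻¹` where `g = ∑_m N^{m+1} t^m/(m+1)!`. -/
def genBernoulli {N : ℕ} (χ : DirichletCharacter ℂ N) (n : ℕ) : ℂ :=
  (n.factorial : ℂ) *
    PowerSeries.coeff (R := ℂ) n
      (∑ a ∈ Finset.Icc 1 N, (χ a) •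
        (PowerSeries.rescale (a : ℂ) (PowerSeries.exp ℂ) *
          (PowerSeries.mk fun m => (N : ℂ) ^ (m + 1) / (m + 1).factorial)⁻¹))

/-- Euler numbers, defined by `2/(e^t + e^{-t}) = ∑ E_n t^n/n!`. -/
def eulerNumber (n : ℕ) : ℚ :=
  (n.factorial : ℚ) *
    PowerSeries.coeff (R := ℚ) n
      (2 * (PowerSeries.mk fun m => (1 + (-1 : ℚ) ^ m) / m.factorial)⁻¹)

/-- Gauss sum `τ(χ) = ∑_{a=1}^{N} χ(a) e^{2πia/N}`. -/
def gaussSum' {N : ℕ} (χ : DirichletCharacter ℂ N) : ℂ :=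
  ∑ a ∈ Finset.Icc 1 N, χ a * Complex.exp (2 * Real.pi * Complex.I * a / N)

/-- The parity `e(χ) ∈ {0,1}` of a Dirichlet character: `χ(-1) = (-1)^{e(χ)}`. -/
def charParity {N : ℕ} (χ : DirichletCharacter ℂ N) : ℕ :=
  if χ (-1) = 1 then 0 else 1

/-- `z_μ = ∏_i i^{m_i(μ)} m_i(μ)!` for a partition `μ`. -/
def zPart {d : ℕ} (μ : Nat.Partition d) : ℕ :=
  ∏ i ∈ μ.parts.toFinset, i ^ μ.parts.count i * (μ.parts.count i).factorial

/-- Truncated strict multiple `L`-sum `∑_{0<m_1<⋯<m_d≤M} ∏_j χ(m_j)/m_j^κ`. -/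
def multLSumLt {N : ℕ} (χ : DirichletCharacter ℂ N) (d κ M : ℕ) : ℂ :=
  ∑ m ∈ (Fintype.piFinset fun _ : Fin d => Finset.Icc 1 M).filter
      (fun m => ∀ i j : Fin d, i < j → m i < m j),
    ∏ j, χ (m j) / (m j : ℂ) ^ κ

/-- Truncated non-strict multiple `L`-sum `∑_{0<m_1≤⋯≤m_d≤M} ∏_j χ(m_j)/m_j^κ`. -/
def multLSumLe {N : ℕ} (χ : DirichletCharacter ℂ N) (d κ M : ℕ) : ℂ :=
  ∑ m ∈ (Fintype.piFinset fun _ : Fin d => Finset.Icc 1 M).filter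
      (fun m => ∀ i j : Fin d, i < j → m i ≤ m j),
    ∏ j, χ (m j) / (m j : ℂ) ^ κ

/-- The Euler-factor correction `α_χ(s) = ∏_{p | N, p ∤ N(χ')} (1 - χ'(p) p^{-s})`. -/
def alphaFactor {N : ℕ} (χ : DirichletCharacter ℂ N) (s : ℕ) : ℂ :=
  ∏ p ∈ N.primeFactors.filter (fun p => ¬ p ∣ χ.conductor),
    (1 - χ.primitiveCharacter p * (p : ℂ) ^ (-(s : ℤ)))

/-- The partition sum of formula (2.8) (principal character mod 2). -/
def principal2EvalSum (k d : ℕ) (strict : Bool) : ℂ :=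
  ∑ μ : Nat.Partition d,
    ((if strict then (-1 : ℂ) ^ ((d : ℤ) - μ.parts.card) else 1) / (zPart μ : ℂ)) *
    ((-1 : ℂ) ^ μ.parts.card *
        (μ.parts.map fun pj => ((2 : ℂ) ^ (2 * k * pj) - 1)).prod / 2 ^ μ.parts.card) *
    (μ.parts.map fun pj =>
      (bernoulli' (2 * k * pj) : ℂ) / ((2 * k * pj).factorial : ℂ)).prod

/-! Write `y m = χ(m)/m^{2k}`. The truncated sums are the elementary (strict) and complete
(non-strict) symmetric functions `e_d`, `h_d` of `y 1, …, y M`, i.e. the `X^d`-coefficients of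
`∏ (1 + y m X)` and `∏ (1 - y m X)⁻¹`. Each of these products `F` solves `F' = c F`, with `c` the
generating series of the (signed) power sums `p_j = ∑ y m ^ j`, and so does the generating series
of the cycle-index polynomials `Z_n(r) = ∑_{μ ⊢ n} r_μ / z_μ` with `r_j = ± p_j`, because
`n Z_n = ∑_i r_i Z_{n-i}`. Hence `e_d = ∑_μ ε_μ p_μ / z_μ` and `h_d = ∑_μ p_μ / z_μ`. As `M → ∞`,
`p_j → ∑_{n odd} n^{-2kj} = (1 - 2^{-2kj}) ζ(2kj)`, which Euler's formula for `ζ(2K)` evaluates. -/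

namespace PowerSeries

variable {R : Type*} [CommSemiring R]

theorem eq_of_derivative_eq_mul [IsAddTorsionFree R] {f g c : R⟦X⟧}
    (hf : d⁄dX R f = c * f) (hg : d⁄dX R g = c * g)
    (h0 : constantCoeff f = constantCoeff g) : f = g := by
  ext n
  induction n using Nat.strong_induction_on with
  | _ n ih =>
    cases n with
    | zero => simpa using h0
    | succ n =>
      have key : (n + 1) • coeff (n + 1) f = (n + 1) • coeff (n + 1) g := by
        simp only [nsmul_eq_mul, Nat.cast_add_one, mul_comm _ (coeff (n + 1) _)]
        rw [← coeff_derivative, ← coeff_derivative, hf, hg, coeff_mul, coeff_mul]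
        refine Finset.sum_congr rfl fun p hp => ?_
        rw [ih p.2 (Nat.lt_succ_of_le (HasAntidiagonal.antidiagonal.snd_le hp))]
      exact nsmul_right_injective n.succ_ne_zero key

theorem derivative_prod_eq_sum_mul_prod {ι : Type*} (s : Finset ι) (f c : ι → R⟦X⟧)
    (h : ∀ i ∈ s, d⁄dX R (f i) = c i * f i) :
    d⁄dX R (∏ i ∈ s, f i) = (∑ i ∈ s, c i) * ∏ i ∈ s, f i := by
  classical
  induction s using Finset.induction_on with
  | empty => simp
  | insert a s ha ih =>
    rw [Finset.prod_insert ha, Finset.sum_insert ha, Derivation.leibniz, smul_eq_mul, smul_eq_mul,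
      h a (Finset.mem_insert_self a s), ih fun i hi => h i (Finset.mem_insert_of_mem hi)]
    ring

theorem derivative_one_add_C_mul_X {R : Type*} [CommRing R] (a : R) :
    d⁄dX R (1 + C a * X) = mk (fun n => (-1) ^ n * a ^ (n + 1)) * (1 + C a * X) := by
  have hD : d⁄dX R (1 + C a * X) = C a := by simp
  ext n
  rw [hD, mul_add, mul_one, map_add, mul_comm (C a), ← mul_assoc, coeff_mul_C]
  cases n with
  | zero => simp
  | succ n =>
    rw [coeff_succ_mul_X, coeff_C, if_neg n.succ_ne_zero, coeff_mk, coeff_mk]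
    ring

theorem derivative_mk_pow (a : R) :
    d⁄dX R (mk (a ^ ·)) = mk (fun n => a ^ (n + 1)) * mk (a ^ ·) := by
  ext n
  rw [coeff_derivative, coeff_mul]
  simp only [coeff_mk]
  rw [Finset.sum_congr rfl fun p hp => by
    rw [← pow_add, show p.1 + 1 + p.2 = n + 1 by
      have := HasAntidiagonal.mem_antidiagonal.1 hp; omega]]
  simp [mul_comm]

theorem mk_pow_eq_one_add_X_mul (a : R) : mk (a ^ ·) = 1 + X * (C a * mk (a ^ ·)) := by
  ext n
  cases n with
  | zero => simp
  | succ n => simp [coeff_succ_X_mul, pow_succ, mul_comm]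

end PowerSeries

theorem Multiset.prod_map_pow_eq_pow_sum {M : Type*} [CommMonoid M] (u : M) (s : Multiset ℕ) :
    (s.map (u ^ ·)).prod = u ^ s.sum :=
  Multiset.induction_on s (by simp) fun a s ih => by simp [pow_add, ih]

def multisetZ (s : Multiset ℕ) : ℕ :=
  ∏ i ∈ s.toFinset, i ^ s.count i * (s.count i).factorial

theorem zPart_eq_multisetZ {n : ℕ} (μ : n.Partition) : zPart μ = multisetZ μ.parts := rfl

theorem multisetZ_eq_prod_of_subset {s : Multiset ℕ} {t : Finset ℕ} (h : s.toFinset ⊆ t) :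
    multisetZ s = ∏ i ∈ t, i ^ s.count i * (s.count i).factorial :=
  Finset.prod_subset h fun _ _ hi => by
    simp [Multiset.count_eq_zero_of_notMem (mt Multiset.mem_toFinset.2 hi)]

theorem multisetZ_cons (i : ℕ) (s : Multiset ℕ) :
    multisetZ (i ::ₘ s) = i * (s.count i + 1) * multisetZ s := by
  classical
  rw [multisetZ_eq_prod_of_subset (Multiset.toFinset_cons i s).le,
    multisetZ_eq_prod_of_subset (Finset.subset_insert i s.toFinset),
    ← Finset.mul_prod_erase _ _ (Finset.mem_insert_self _ _),
    ← Finset.mul_prod_erase _ _ (Finset.mem_insert_self _ _),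
    Finset.prod_congr rfl fun j hj => by rw [Multiset.count_cons_of_ne (Finset.ne_of_mem_erase hj)],
    Multiset.count_cons_self, pow_succ, Nat.factorial_succ]
  ring

theorem zPart_pos {n : ℕ} (μ : n.Partition) : 0 < zPart μ :=
  Finset.prod_pos fun _ hi =>
    Nat.mul_pos (pow_pos (μ.parts_pos (Multiset.mem_toFinset.1 hi)) _) (Nat.factorial_pos _)

open PowerSeries

section CycleIndex

variable {K : Type*} [Field K]

/-- The cycle index of the symmetric group `S_n`, evaluated at `p_i ↦ r i`. -/
def cycleIndex (r : ℕ → K) (n : ℕ) : K :=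
  ∑ μ : n.Partition, (μ.parts.map r).prod / zPart μ

@[simp]
theorem cycleIndex_zero (r : ℕ → K) : cycleIndex r 0 = 1 := by
  simp [cycleIndex, zPart]

theorem tendsto_cycleIndex [TopologicalSpace K] [IsTopologicalRing K] {α : Type*}
    {l : Filter α} {f : α → ℕ → K} {r : ℕ → K}
    (h : ∀ p, p ≠ 0 → Tendsto (fun a => f a p) l (𝓝 (r p))) (n : ℕ) :
    Tendsto (fun a => cycleIndex (f a) n) l (𝓝 (cycleIndex r n)) :=
  tendsto_finsetSum _ fun μ _ =>
    (tendsto_multiset_prod _ fun p hp => h p (μ.parts_pos hp).ne').div_const _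

variable [CharZero K]

theorem sum_mem_parts_count_mul_div_zPart (r : ℕ → K) {n i : ℕ} (hi : 1 ≤ i) (hin : i ≤ n) :
    ∑ μ : n.Partition with i ∈ μ.parts,
        ((μ.parts.count i * i : ℕ) : K) * ((μ.parts.map r).prod / zPart μ) =
      r i * cycleIndex r (n - i) := by
  rw [Finset.sum_subtype (p := fun μ : n.Partition => i ∈ μ.parts) _ (fun μ => by simp),
    cycleIndex, Finset.mul_sum, ← (Nat.Partition.partitionWithPartEquiv hi hin).symm.sum_comp]
  refine Finset.sum_congr rfl fun ν _ => ?_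
  have hz : (zPart ν : K) ≠ 0 := Nat.cast_ne_zero.2 (zPart_pos ν).ne'
  have hi0 : (i : K) ≠ 0 := Nat.cast_ne_zero.2 (by omega)
  rw [zPart_eq_multisetZ, Nat.Partition.partitionWithPartEquiv_symm_apply_parts, multisetZ_cons,
    ← zPart_eq_multisetZ, Multiset.count_cons_self, Multiset.map_cons, Multiset.prod_cons]
  push_cast
  field_simp

-- `n = ∑_i i·m_i(μ)`, and removing one part `i` from `μ` divides `z_μ` by `i·m_i(μ)`.
theorem natCast_mul_cycleIndex (r : ℕ → K) (n : ℕ) :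
    (n : K) * cycleIndex r n = ∑ i ∈ Finset.Icc 1 n, r i * cycleIndex r (n - i) := by
  have hweight (μ : n.Partition) :
      (n : K) = ∑ i ∈ μ.parts.toFinset, ((μ.parts.count i * i : ℕ) : K) := by
    conv_lhs => rw [← μ.parts_sum, Finset.sum_multiset_count]
    simp [mul_comm]
  rw [cycleIndex, Finset.mul_sum,
    Finset.sum_congr rfl fun μ _ => by rw [hweight μ, Finset.sum_mul],
    Finset.sum_comm' (t' := Finset.Icc 1 n) (s' := fun i => {μ : n.Partition | i ∈ μ.parts})]
  · exact Finset.sum_congr rfl fun i hi =>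
      sum_mem_parts_count_mul_div_zPart r (Finset.mem_Icc.1 hi).1 (Finset.mem_Icc.1 hi).2
  · intro μ i
    simp only [Finset.mem_univ, Multiset.mem_toFinset, true_and, Finset.mem_filter,
      Finset.mem_Icc, iff_self_and]
    exact fun hi => ⟨μ.parts_pos hi, Nat.Partition.le_of_mem_parts hi⟩

theorem derivative_mk_cycleIndex (r : ℕ → K) :
    d⁄dX K (mk (cycleIndex r)) = mk (fun n => r (n + 1)) * mk (cycleIndex r) := by
  ext n
  rw [coeff_derivative, coeff_mk, coeff_mul, mul_comm, ← Nat.cast_add_one, natCast_mul_cycleIndex,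
    Finset.Nat.sum_antidiagonal_eq_sum_range_succ
      (fun i j => coeff i (mk _) * coeff j (mk _)),
    ← Finset.Ico_add_one_right_eq_Icc, Finset.sum_Ico_eq_sum_range]
  simp [add_comm 1]

theorem prod_one_add_C_mul_X_eq_mk_cycleIndex {ι : Type*} (s : Finset ι) (y : ι → K) :
    ∏ m ∈ s, (1 + C (y m) * X) = mk (cycleIndex fun p => (-1) ^ (p + 1) * ∑ m ∈ s, y m ^ p) := by
  refine eq_of_derivative_eq_mul (c := mk fun n => (-1) ^ n * ∑ m ∈ s, y m ^ (n + 1)) ?_ ?_ ?_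
  · rw [derivative_prod_eq_sum_mul_prod _ _ _ fun m _ => derivative_one_add_C_mul_X (y m)]
    congr 1
    ext n
    simp [map_sum, Finset.mul_sum]
  · rw [derivative_mk_cycleIndex]
    congr 1
    ext n
    simp [pow_succ]
  · simp [map_prod]

theorem prod_mk_pow_eq_mk_cycleIndex {ι : Type*} (s : Finset ι) (y : ι → K) :
    ∏ m ∈ s, mk (y m ^ ·) = mk (cycleIndex fun p => ∑ m ∈ s, y m ^ p) := by
  refine eq_of_derivative_eq_mul (c := mk fun n => ∑ m ∈ s, y m ^ (n + 1)) ?_ ?_ ?_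
  · rw [derivative_prod_eq_sum_mul_prod _ _ _ fun m _ => derivative_mk_pow (y m)]
    congr 1
    ext n
    simp [map_sum]
  · rw [derivative_mk_cycleIndex]
  · simp [map_prod]

end CycleIndex

section Chains

variable (r : ℕ → ℕ → Prop) [DecidableRel r]

def chains (d M : ℕ) : Finset (Fin d → ℕ) :=
  (Fintype.piFinset fun _ => Finset.Icc 1 M).filter fun m => ∀ i j, i < j → r (m i) (m j)

def chainSum {R : Type*} [CommSemiring R] (y : ℕ → R) (d M : ℕ) : R :=
  ∑ m ∈ chains r d M, ∏ j, y (m j)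

variable {r}

theorem mem_chains {d M : ℕ} {m : Fin d → ℕ} :
    m ∈ chains r d M ↔ (∀ i, m i ∈ Finset.Icc 1 M) ∧ ∀ i j, i < j → r (m i) (m j) := by
  simp [chains]

theorem snoc_mem_chains {d M : ℕ} (g : Fin d → ℕ) (a : ℕ) :
    (Fin.snoc g a : Fin (d + 1) → ℕ) ∈ chains r (d + 1) M ↔
      g ∈ chains r d M ∧ a ∈ Finset.Icc 1 M ∧ ∀ i, r (g i) a := by
  have hlast (i : Fin d) : ¬ Fin.last d < i.castSucc := (Fin.castSucc_lt_last i).not_gt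
  simp only [chains, Finset.mem_filter, Fintype.mem_piFinset, Fin.forall_fin_succ',
    Fin.snoc_castSucc, Fin.snoc_last, Fin.castSucc_lt_castSucc_iff, Fin.castSucc_lt_last,
    hlast, lt_irrefl, forall_const, IsEmpty.forall_iff, forall_and]
  tauto

theorem filter_last_ne_chains (hr : ∀ a b, r a b → a ≤ b) (d M : ℕ) :
    {m ∈ chains r (d + 1) (M + 1) | ¬ m (Fin.last d) = M + 1} = chains r (d + 1) M := by
  ext m
  obtain ⟨g, a, rfl⟩ : ∃ g a, m = Fin.snoc g a := ⟨_, _, (Fin.snoc_init_self m).symm⟩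
  rw [Finset.mem_filter, snoc_mem_chains, snoc_mem_chains, Fin.snoc_last]
  simp only [mem_chains, Finset.mem_Icc]
  constructor
  · rintro ⟨⟨⟨hg, hchain⟩, ⟨ha1, ha2⟩, hga⟩, hne⟩
    have haM : a ≤ M := by omega
    exact ⟨⟨fun i => ⟨(hg i).1, (hr _ _ (hga i)).trans haM⟩, hchain⟩, ⟨ha1, haM⟩, hga⟩
  · rintro ⟨⟨hg, hchain⟩, ⟨ha1, haM⟩, hga⟩
    exact ⟨⟨⟨fun i => ⟨(hg i).1, (hg i).2.trans M.le_succ⟩, hchain⟩, ⟨ha1, by omega⟩, hga⟩,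
      by omega⟩

variable {R : Type*} [CommSemiring R]

theorem sum_chains_last_eq (y : ℕ → R) (d M : ℕ) :
    ∑ m ∈ chains r (d + 1) (M + 1) with m (Fin.last d) = M + 1, ∏ j, y (m j) =
      y (M + 1) * ∑ g ∈ chains r d (M + 1) with ∀ i, r (g i) (M + 1), ∏ j, y (g j) := by
  rw [Finset.mul_sum]
  refine Finset.sum_nbij' Fin.init (Fin.snoc · (M + 1)) ?_ ?_ ?_ ?_ ?_
  · intro m hm
    obtain ⟨g, a, rfl⟩ : ∃ g a, m = Fin.snoc g a := ⟨_, _, (Fin.snoc_init_self m).symm⟩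
    simp only [Finset.mem_filter, snoc_mem_chains, Fin.snoc_last] at hm
    obtain ⟨⟨hg, -, hga⟩, rfl⟩ := hm
    simpa [Fin.init_snoc] using ⟨hg, hga⟩
  · intro g hg
    simp only [Finset.mem_filter] at hg
    simpa [snoc_mem_chains] using hg
  · intro m hm
    rw [← (Finset.mem_filter.1 hm).2, Fin.snoc_init_self]
  · intro g _
    exact Fin.init_snoc _ _
  · intro m hm
    rw [Fin.prod_univ_castSucc, (Finset.mem_filter.1 hm).2, mul_comm]
    rfl

theorem chainSum_succ_succ (hr : ∀ a b, r a b → a ≤ b) (y : ℕ → R) (d M : ℕ) :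
    chainSum r y (d + 1) (M + 1) = chainSum r y (d + 1) M +
      y (M + 1) * ∑ g ∈ chains r d (M + 1) with ∀ i, r (g i) (M + 1), ∏ j, y (g j) := by
  rw [chainSum, ← Finset.sum_filter_not_add_sum_filter _ (fun m => m (Fin.last d) = M + 1),
    filter_last_ne_chains hr, sum_chains_last_eq]
  rfl

@[simp]
theorem chainSum_zero (y : ℕ → R) (M : ℕ) : chainSum r y 0 M = 1 := by
  simp [chainSum, chains]

@[simp]
theorem chainSum_succ_zero (y : ℕ → R) (d : ℕ) : chainSum r y (d + 1) 0 = 0 := by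
  simp [chainSum, chains]

theorem chainSum_lt_succ_succ (y : ℕ → R) (d M : ℕ) :
    chainSum (· < ·) y (d + 1) (M + 1) =
      chainSum (· < ·) y (d + 1) M + y (M + 1) * chainSum (· < ·) y d M := by
  rw [chainSum_succ_succ (fun _ _ => le_of_lt)]
  congr 3
  ext g
  simp only [Finset.mem_filter, mem_chains, Finset.mem_Icc, Order.lt_add_one_iff]
  exact ⟨fun ⟨⟨hg, hchain⟩, hgM⟩ => ⟨fun i => ⟨(hg i).1, hgM i⟩, hchain⟩,
    fun ⟨hg, hchain⟩ => ⟨⟨fun i => ⟨(hg i).1, (hg i).2.trans M.le_succ⟩, hchain⟩,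
      fun i => (hg i).2⟩⟩

theorem chainSum_le_succ_succ (y : ℕ → R) (d M : ℕ) :
    chainSum (· ≤ ·) y (d + 1) (M + 1) =
      chainSum (· ≤ ·) y (d + 1) M + y (M + 1) * chainSum (· ≤ ·) y d (M + 1) := by
  rw [chainSum_succ_succ (fun _ _ => id), Finset.filter_true_of_mem fun g hg i =>
    (Finset.mem_Icc.1 ((mem_chains.1 hg).1 i)).2]
  rfl

theorem coeff_prod_one_add_C_mul_X_eq_chainSum (y : ℕ → R) (d M : ℕ) :
    coeff d (∏ m ∈ Finset.Icc 1 M, (1 + C (y m) * X)) = chainSum (· < ·) y d M := by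
  induction M generalizing d with
  | zero => cases d <;> simp
  | succ M ih =>
    cases d with
    | zero => simp
    | succ d =>
      rw [Finset.prod_Icc_succ_top (by omega), mul_add, mul_one, ← mul_assoc, map_add,
        coeff_succ_mul_X, coeff_mul_C, ih, ih, chainSum_lt_succ_succ, mul_comm (y _)]

theorem coeff_prod_mk_pow_eq_chainSum (y : ℕ → R) (d M : ℕ) :
    coeff d (∏ m ∈ Finset.Icc 1 M, mk (y m ^ ·)) = chainSum (· ≤ ·) y d M := by
  induction M generalizing d with
  | zero => cases d <;> simp
  | succ M ihM =>
    induction d with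
    | zero => simp
    | succ d ihd =>
      rw [Finset.prod_Icc_succ_top (by omega)] at ihd ⊢
      rw [chainSum_le_succ_succ, ← ihM, ← ihd]
      conv_lhs => rw [mk_pow_eq_one_add_X_mul, mul_add, mul_one, mul_left_comm,
        mul_left_comm _ (C _), map_add, coeff_succ_X_mul, coeff_C_mul]

end Chains

section Expansion

variable {K : Type*} [Field K] [CharZero K]

theorem chainSum_lt_eq_cycleIndex (y : ℕ → K) (d M : ℕ) :
    chainSum (· < ·) y d M =
      cycleIndex (fun p => (-1) ^ (p + 1) * ∑ m ∈ Finset.Icc 1 M, y m ^ p) d := by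
  rw [← coeff_prod_one_add_C_mul_X_eq_chainSum, prod_one_add_C_mul_X_eq_mk_cycleIndex, coeff_mk]

theorem chainSum_le_eq_cycleIndex (y : ℕ → K) (d M : ℕ) :
    chainSum (· ≤ ·) y d M = cycleIndex (fun p => ∑ m ∈ Finset.Icc 1 M, y m ^ p) d := by
  rw [← coeff_prod_mk_pow_eq_chainSum, prod_mk_pow_eq_mk_cycleIndex, coeff_mk]

end Expansion

theorem MulChar.one_apply_pow {M R : Type*} [CommMonoid M] [CommMonoidWithZero R] (a : M)
    {p : ℕ} (hp : p ≠ 0) : (1 : MulChar M R) a ^ p = (1 : MulChar M R) a := by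
  by_cases ha : IsUnit a
  · simp [MulChar.one_apply ha]
  · simp [MulChar.map_nonunit _ ha, hp]

namespace DirichletCharacter

variable {R : Type*} [CommMonoidWithZero R]

theorem one_apply_two_mul (k : ℕ) : (1 : DirichletCharacter R 2) ((2 * k : ℕ) : ZMod 2) = 0 :=
  MulChar.map_nonunit _ (by rw [Nat.cast_mul, ZMod.natCast_self, zero_mul]; exact not_isUnit_zero)

theorem one_apply_two_mul_add_one (k : ℕ) :
    (1 : DirichletCharacter R 2) ((2 * k + 1 : ℕ) : ZMod 2) = 1 := by
  rw [Nat.cast_succ, Nat.cast_mul, ZMod.natCast_self, zero_mul, zero_add, map_one]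

end DirichletCharacter

/-- `λ(2K) = ∑_{n odd} n^{-2K}` (Dirichlet's lambda function), in closed form. -/
def lambdaEven (K : ℕ) : ℂ :=
  (-1) ^ (K + 1) * (2 ^ (2 * K) - 1) / 2 * (Real.pi : ℂ) ^ (2 * K) * bernoulli' (2 * K) /
    (2 * K).factorial

theorem hasSum_principal_two_div_pow {K : ℕ} (hK : K ≠ 0) :
    HasSum (fun n : ℕ => (1 : DirichletCharacter ℂ 2) n / (n : ℂ) ^ (2 * K)) (lambdaEven K) := by
  set Z : ℂ := (-1) ^ (K + 1) * 2 ^ (2 * K - 1) * (Real.pi : ℂ) ^ (2 * K) * bernoulli (2 * K) /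
    (2 * K).factorial with hZ
  have hζ : HasSum (fun n : ℕ => 1 / (n : ℂ) ^ (2 * K)) Z := by
    simpa [hZ] using hasSum_ofReal.2 (hasSum_zeta_nat hK)
  have heven : HasSum (fun n : ℕ => (1 - (1 : DirichletCharacter ℂ 2) n) / (n : ℂ) ^ (2 * K))
      (Z / 2 ^ (2 * K)) := by
    rw [← add_zero (Z / _)]
    refine ((hζ.div_const _).congr_fun fun n => ?_).even_add_odd
      (hasSum_zero.congr_fun fun n => ?_)
    · rw [DirichletCharacter.one_apply_two_mul]
      push_cast
      ring
    · rw [DirichletCharacter.one_apply_two_mul_add_one, sub_self, zero_div]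
  have hval : Z - Z / 2 ^ (2 * K) = lambdaEven K := by
    have h2 : (2 : ℂ) ^ (2 * K - 1) = 2 ^ (2 * K) / 2 := by
      rw [eq_div_iff two_ne_zero, ← pow_succ, Nat.sub_add_cancel (by omega)]
    rw [hZ, lambdaEven, h2, bernoulli_eq_bernoulli'_of_ne_one (by omega)]
    field_simp
  rw [← hval]
  exact (hζ.sub heven).congr_fun fun n => by ring

theorem tendsto_sum_Icc_of_hasSum {M : Type*} [AddCommMonoid M] [TopologicalSpace M] {f : ℕ → M}
    {a : M} (hf : HasSum f a) (h0 : f 0 = 0) :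
    Tendsto (fun N => ∑ m ∈ Finset.Icc 1 N, f m) atTop (𝓝 a) := by
  refine (hf.tendsto_sum_nat.comp (tendsto_add_atTop_nat 1)).congr fun N => ?_
  rw [Function.comp_apply, Finset.range_eq_Ico, Finset.sum_eq_sum_Ico_succ_bot N.succ_pos, h0,
    zero_add, zero_add, Nat.succ_eq_add_one, Finset.Ico_add_one_right_eq_Icc]

theorem tendsto_sum_Icc_principal_two_pow {k p : ℕ} (hk : k ≠ 0) (hp : p ≠ 0) :
    Tendsto (fun N => ∑ m ∈ Finset.Icc (1 : ℕ) N,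
        ((1 : DirichletCharacter ℂ 2) m / (m : ℂ) ^ (2 * k)) ^ p) atTop
      (𝓝 (lambdaEven (k * p))) := by
  have hpow (m : ℕ) : ((1 : DirichletCharacter ℂ 2) m / (m : ℂ) ^ (2 * k)) ^ p =
      (1 : DirichletCharacter ℂ 2) m / (m : ℂ) ^ (2 * (k * p)) := by
    rw [div_pow, MulChar.one_apply_pow _ hp, ← pow_mul, mul_assoc]
  simp_rw [hpow]
  exact tendsto_sum_Icc_of_hasSum (hasSum_principal_two_div_pow (mul_ne_zero hk hp))
    (by simp [hk, hp])

theorem cycleIndex_lambdaEven (k d : ℕ) (strict : Bool) :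
    cycleIndex (fun p => (if strict then -1 else 1) ^ (p + 1) * lambdaEven (k * p)) d =
      (-1) ^ (k * d) * principal2EvalSum k d strict * (Real.pi : ℂ) ^ (2 * k * d) := by
  set c : ℂ := if strict then -1 else 1
  have hsign (μ : d.Partition) :
      (if strict then (-1 : ℂ) ^ ((d : ℤ) - μ.parts.card) else 1) = c ^ (d + μ.parts.card) := by
    cases strict
    · simp [c]
    · rw [if_pos rfl, zpow_sub₀ (by norm_num), zpow_natCast, zpow_natCast, div_eq_mul_inv,
        ← inv_pow, inv_neg, inv_one, pow_add]
      rfl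
  -- each factor split so that its product over the parts of `μ` can be read off
  have hpart (p : ℕ) : c ^ (p + 1) * lambdaEven (k * p) =
      -1 * (c * ((c * (-1) ^ k * (Real.pi : ℂ) ^ (2 * k)) ^ p * (((2 : ℂ) ^ (2 * k * p) - 1) *
        ((bernoulli' (2 * k * p) : ℂ) / (2 * k * p).factorial)))) / 2 := by
    rw [lambdaEven, show 2 * (k * p) = 2 * k * p by ring]
    ring
  rw [cycleIndex, principal2EvalSum, Finset.mul_sum, Finset.sum_mul]
  refine Finset.sum_congr rfl fun μ _ => ?_
  simp only [Multiset.map_congr rfl fun p _ => hpart p, Multiset.prod_map_div,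
    Multiset.prod_map_mul, Multiset.map_const', Multiset.prod_replicate,
    Multiset.prod_map_pow_eq_pow_sum, μ.parts_sum, hsign]
  ring

theorem multiple_L_value_principal_mod_two_general
    (k d : ℕ) (hk : 1 ≤ k) :
    Tendsto (multLSumLt (1 : DirichletCharacter ℂ 2) d (2 * k)) atTop
      (𝓝 ((-1 : ℂ) ^ (k * d) * principal2EvalSum k d true *
        (Real.pi : ℂ) ^ (2 * k * d))) ∧
    Tendsto (multLSumLe (1 : DirichletCharacter ℂ 2) d (2 * k)) atTop
      (𝓝 ((-1 : ℂ) ^ (k * d) * principal2EvalSum k d false *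
        (Real.pi : ℂ) ^ (2 * k * d))) := by
  have hpow (p : ℕ) (hp : p ≠ 0) :=
    tendsto_sum_Icc_principal_two_pow (Nat.one_le_iff_ne_zero.1 hk) hp
  rw [← cycleIndex_lambdaEven, ← cycleIndex_lambdaEven]
  simp only [if_true, Bool.false_eq_true, if_false, one_pow, one_mul]
  constructor
  · exact (tendsto_cycleIndex (fun p hp => (hpow p hp).const_mul ((-1) ^ (p + 1))) d).congr
      fun N => (chainSum_lt_eq_cycleIndex _ d N).symm
  · exact (tendsto_cycleIndex hpow d).congr fun N => (chainSum_le_eq_cycleIndex _ d N).symm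

/-- **Formula (2.8)**: for the principal Dirichlet character `χ^{(2)}_1` mod `2`
(which is `1 : DirichletCharacter ℂ 2`: value `1` on odd integers, `0` on even ones)
and integers `k ≥ 1`, `d ≥ 1`,
`L^ω_d({2k}^d; {χ^{(2)}_1}^d) = (-1)^{kd}
  [Σ_{μ ⊢ d} (ε^ω_μ/z_μ) ((-1)^{ℓ(μ)} ∏_j (2^{2kμ_j}-1)/2^{ℓ(μ)})
    ∏_j B_{2kμ_j}/(2kμ_j)!] π^{2kd}`.
The multiple `L`-value is expressed as the limit of its truncations. -/
theorem multiple_L_value_principal_mod_two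
    (k d : ℕ) (hk : 1 ≤ k) (hd : 1 ≤ d) :
    Tendsto (multLSumLt (1 : DirichletCharacter ℂ 2) d (2 * k)) atTop
      (𝓝 ((-1 : ℂ) ^ (k * d) * principal2EvalSum k d true *
        (Real.pi : ℂ) ^ (2 * k * d))) ∧
    Tendsto (multLSumLe (1 : DirichletCharacter ℂ 2) d (2 * k)) atTop
      (𝓝 ((-1 : ℂ) ^ (k * d) * principal2EvalSum k d false *
        (Real.pi : ℂ) ^ (2 * k * d))) :=
  multiple_L_value_principal_mod_two_general k d hk

end
end

section
/- Let χ_{-8} be the primitive real Dirichlet character modulo 8 given by the Kronecker symbol (−8/·), i.e. χ_{-8}(n) = 1 for n ≡ 1, 3 (mod 8), χ_{-8}(n) = −1 for n ≡ 5, 7 (mod 8), and χ_{-8}(n) = 0 for even n. Then the double L-value L^•_2({1}^2; {χ_{-8}}^2) := lim_{M→∞} Σ_{0<m<n≤M} χ_{-8}(m)χ_{-8}(n)/(m n) equals 0. -/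
/-!
Write `a n = χ₋₈(n) / n`. Twice the truncated double sum is `(∑ a n)² - ∑ (a n)²`, so the limit
is `(L(1, χ₋₈)² - ∑_{n odd} 1/n²) / 2`, and `∑_{n odd} 1/n² = (1 - 1/4) ζ(2) = π²/8`.

For `L(1, χ₋₈)`: `√2 χ₋₈(n) = sin (nπ/4) + sin (3nπ/4)`, and taking imaginary parts in the series
of `-log (1 - z)` gives `∑ sin (nθ) xⁿ / n = -arg (1 - x e^{iθ})` for `|x| < 1`. The series
`∑ χ₋₈(n) / n` converges by Dirichlet's test, so by Abel's theorem its sum is the limit as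
`x → 1⁻`, and `arg (1 - e^{iθ}) = (θ - π) / 2` gives `L(1, χ₋₈) = (3π/8 + π/8) / √2 = π / (2√2)`,
whose square is `π²/8`.
-/

open Complex Filter Finset Topology

noncomputable section

/-- The primitive real Dirichlet character mod 8 given by the Kronecker symbol `(-8/·)`,
i.e. `χ_{-8}(n) = 1` for `n ≡ 1, 3 (mod 8)`, `-1` for `n ≡ 5, 7 (mod 8)`, and `0` for
even `n`; this is Mathlib's `ZMod.χ₈'`, valued in `ℂ`. -/
def chiEight' : DirichletCharacter ℂ 8 := ZMod.χ₈'.ringHomComp (Int.castRingHom ℂ)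

/-- The truncation `∑_{0<m<n≤M} χ_{-8}(m)χ_{-8}(n)/(mn)` of the double `L`-value
`L^•_2({1}^2; {χ_{-8}}^2)`. -/
def doubleLSumChiEight (M : ℕ) : ℂ :=
  ∑ n ∈ Finset.Icc 1 M, ∑ m ∈ Finset.Ico 1 n,
    chiEight' m * chiEight' n / ((m : ℂ) * (n : ℂ))

open scoped Real

theorem two_mul_sum_Icc_sum_Ico_mul {R : Type*} [CommRing R] (f : ℕ → R) (M : ℕ) :
    2 * ∑ n ∈ Icc 1 M, ∑ m ∈ Ico 1 n, f m * f n =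
      (∑ n ∈ Icc 1 M, f n) ^ 2 - ∑ n ∈ Icc 1 M, f n ^ 2 := by
  induction M with
  | zero => simp
  | succ M ih =>
    have h1 : 1 ≤ M + 1 := Nat.le_add_left 1 M
    rw [sum_Icc_succ_top h1, sum_Icc_succ_top h1, sum_Icc_succ_top h1,
      Ico_add_one_right_eq_Icc, ← sum_mul, mul_add, ih]
    ring

theorem sum_Icc_one_eq_sum_range_succ {M : Type*} [AddCommMonoid M] {f : ℕ → M} (hf : f 0 = 0)
    (n : ℕ) : ∑ i ∈ Icc 1 n, f i = ∑ i ∈ range (n + 1), f i := by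
  rw [sum_range_succ', hf, add_zero, ← Ico_add_one_right_eq_Icc, sum_Ico_eq_sum_range]
  simp [add_comm]

namespace Function.Periodic

variable {N : ℕ}

theorem sum_range_periodic {M : Type*} [AddCommMonoid M] {f : ℕ → M} (hf : Periodic f N)
    (hsum : ∑ i ∈ range N, f i = 0) : Periodic (fun n ↦ ∑ i ∈ range n, f i) N := by
  intro n
  induction n with
  | zero => simpa using hsum
  | succ n ih =>
    simp only [Nat.add_right_comm n 1 N, sum_range_succ] at ih ⊢
    rw [ih, hf n]

theorem exists_norm_sum_range_le {E : Type*} [SeminormedAddCommGroup E] {f : ℕ → E}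
    (hf : Periodic f N) (hN : 0 < N) (hsum : ∑ i ∈ range N, f i = 0) :
    ∃ C, ∀ n, ‖∑ i ∈ range n, f i‖ ≤ C := by
  refine ⟨∑ k ∈ range N, ‖∑ i ∈ range k, f i‖, fun n ↦ ?_⟩
  rw [← (hf.sum_range_periodic hsum).map_mod_nat n]
  exact single_le_sum (f := fun k ↦ ‖∑ i ∈ range k, f i‖) (fun _ _ ↦ norm_nonneg _)
    (mem_range.mpr (Nat.mod_lt n hN))

theorem exists_tendsto_sum_range_div {f : ℕ → ℝ} (hf : Periodic f N) (hN : 0 < N)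
    (hsum : ∑ i ∈ range N, f i = 0) :
    ∃ l, Tendsto (fun n ↦ ∑ i ∈ range n, f i / i) atTop (𝓝 l) := by
  obtain ⟨C, hC⟩ := hf.exists_norm_sum_range_le hN hsum
  have hbdd (n : ℕ) : ‖∑ i ∈ range n, f (i + 1)‖ ≤ C + ‖f 0‖ := by
    have hsub := norm_sub_le (∑ i ∈ range (n + 1), f i) (f 0)
    have hCn := hC (n + 1)
    rw [sum_range_succ'] at hsub hCn
    rw [add_sub_cancel_right] at hsub
    linarith
  have hanti : Antitone fun i : ℕ ↦ 1 / ((i : ℝ) + 1) := fun a b hab ↦ by dsimp only; gcongr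
  obtain ⟨l, hl⟩ := cauchySeq_tendsto_of_complete <|
    hanti.cauchySeq_series_mul_of_tendsto_zero_of_bounded
      tendsto_one_div_add_atTop_nhds_zero_nat hbdd
  refine ⟨l, (tendsto_add_atTop_iff_nat 1).mp (hl.congr fun n ↦ ?_)⟩
  rw [sum_range_succ']
  simp [div_eq_inv_mul]

end Function.Periodic

theorem hasSum_sin_mul_div_mul_pow (θ : ℝ) {x : ℝ} (hx : |x| < 1) :
    HasSum (fun n : ℕ ↦ Real.sin (n * θ) / n * x ^ n) (-arg (1 - x * exp (θ * I))) := by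
  have hz : ‖(x : ℂ) * exp (θ * I)‖ < 1 := by
    rwa [norm_mul, norm_exp_ofReal_mul_I, mul_one, norm_real, Real.norm_eq_abs]
  convert hasSum_im (hasSum_taylorSeries_neg_log hz) using 1
  · funext n
    rw [mul_pow, ← exp_nat_mul, show (n : ℂ) * (θ * I) = ((n * θ : ℝ) : ℂ) * I by push_cast; ring,
      mul_div_right_comm, show (x : ℂ) ^ n / n = ((x ^ n / n : ℝ) : ℂ) by push_cast; rfl,
      im_ofReal_mul, exp_ofReal_mul_I_im]
    ring
  · rw [neg_im, log_im]

theorem one_sub_exp_mul_I_eq (θ : ℝ) :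
    1 - exp (θ * I) = ((2 * Real.sin (θ / 2) : ℝ) : ℂ) *
      (cos ((θ - π) / 2 : ℝ) + sin ((θ - π) / 2 : ℝ) * I) := by
  have hcos : Real.cos ((θ - π) / 2) = Real.sin (θ / 2) := by
    rw [sub_div, Real.cos_sub_pi_div_two]
  have hsin : Real.sin ((θ - π) / 2) = -Real.cos (θ / 2) := by
    rw [sub_div, Real.sin_sub_pi_div_two]
  have hθ : θ = 2 * (θ / 2) := by ring
  apply Complex.ext
  · simp only [sub_re, one_re, exp_ofReal_mul_I_re, ← ofReal_cos, ← ofReal_sin, mul_re,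
      ofReal_re, ofReal_im, add_re, add_im, mul_im, I_re, I_im, hcos, hsin]
    rw [hθ, Real.cos_two_mul, ← hθ]
    nlinarith [Real.sin_sq_add_cos_sq (θ / 2)]
  · simp only [sub_im, one_im, exp_ofReal_mul_I_im, ← ofReal_cos, ← ofReal_sin, mul_re,
      ofReal_re, ofReal_im, add_re, add_im, mul_im, I_re, I_im, hcos, hsin]
    rw [hθ, Real.sin_two_mul, ← hθ]
    ring

theorem arg_one_sub_exp_mul_I {θ : ℝ} (hθ : θ ∈ Set.Ioo 0 (2 * π)) :
    arg (1 - exp (θ * I)) = (θ - π) / 2 := by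
  have hsin : 0 < Real.sin (θ / 2) := Real.sin_pos_of_pos_of_lt_pi (by linarith [hθ.1])
    (by linarith [hθ.2])
  rw [one_sub_exp_mul_I_eq, arg_real_mul _ (by positivity), arg_cos_add_sin_mul_I]
  constructor <;> linarith [hθ.1, hθ.2, Real.pi_pos]

theorem tendsto_arg_one_sub_mul_exp_mul_I {θ : ℝ} (hθ : θ ∈ Set.Ioo 0 (2 * π)) :
    Tendsto (fun x : ℝ ↦ arg (1 - x * exp (θ * I))) (𝓝 1) (𝓝 ((θ - π) / 2)) := by
  have hcos : Real.cos θ < 1 := lt_of_le_of_ne (Real.cos_le_one θ) fun h ↦ by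
    rw [Real.cos_eq_one_iff_of_lt_of_lt (by linarith [hθ.1, Real.pi_pos]) hθ.2] at h
    exact hθ.1.ne' h
  have hslit : 1 - ((1 : ℝ) : ℂ) * exp (θ * I) ∈ slitPlane := mem_slitPlane_iff.mpr <| Or.inl <| by
    rw [ofReal_one, one_mul, sub_re, one_re, exp_ofReal_mul_I_re]
    linarith
  have hcont : ContinuousAt (fun x : ℝ ↦ 1 - (x : ℂ) * exp (θ * I)) 1 := by fun_prop
  rw [← arg_one_sub_exp_mul_I hθ]
  simpa [Function.comp_def] using
    (ContinuousAt.comp (f := fun x : ℝ ↦ 1 - (x : ℂ) * exp (θ * I)) (continuousAt_arg hslit)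
      hcont).tendsto

namespace ZMod

theorem periodic_χ₈'_natCast : Function.Periodic (fun n : ℕ ↦ (χ₈' n : ℝ)) 8 := by
  intro n
  simp only [Nat.cast_add, natCast_self, add_zero]

theorem sum_range_eight_χ₈'_natCast : ∑ i ∈ range 8, (χ₈' i : ℝ) = 0 := by
  simp [sum_range_succ]

theorem χ₈'_natCast_eq_zero_of_even {n : ℕ} (hn : Even n) : χ₈' n = 0 := by
  rw [χ₈'_nat_eq_if_mod_eight, if_pos (Nat.even_iff.mp hn)]

theorem χ₈'_natCast_sq_of_odd {n : ℕ} (hn : Odd n) : χ₈' n ^ 2 = 1 := by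
  rw [χ₈'_nat_eq_if_mod_eight, if_neg (Nat.odd_iff.mp hn ▸ one_ne_zero)]
  split_ifs <;> rfl

theorem χ₈'_natCast_eq_sin_add_sin (n : ℕ) :
    (χ₈' n : ℝ) = (Real.sin (n * (π / 4)) + Real.sin (n * (3 * π / 4))) / √2 := by
  set s : ℕ → ℝ := fun k ↦ Real.sin (k * (π / 4)) with hs_def
  have hs4 (k : ℕ) : s (k + 4) = -s k := by
    simp only [hs_def, Nat.cast_add, add_mul]
    rw [show ((4 : ℕ) : ℝ) * (π / 4) = π by push_cast; ring, Real.sin_add_pi]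
  have hs : Function.Periodic s 8 := fun k ↦ by
    rw [show k + 8 = k + 4 + 4 by ring, hs4, hs4, neg_neg]
  have hs0 : s 0 = 0 := by simp [hs_def]
  have hs1 : s 1 = √2 / 2 := by simp [hs_def, Real.sin_pi_div_four]
  have hs2 : s 2 = 1 := by
    simp only [hs_def]
    rw [show ((2 : ℕ) : ℝ) * (π / 4) = π / 2 by push_cast; ring, Real.sin_pi_div_two]
  have hs3 : s 3 = √2 / 2 := by
    simp only [hs_def]
    rw [show ((3 : ℕ) : ℝ) * (π / 4) = π - π / 4 by push_cast; ring, Real.sin_pi_sub,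
      Real.sin_pi_div_four]
  have h3 : Real.sin (n * (3 * π / 4)) = s (3 * n % 8) := by
    rw [hs.map_mod_nat, hs_def]
    push_cast
    ring_nf
  rw [h3, show Real.sin (n * (π / 4)) = s n from rfl, ← periodic_χ₈'_natCast.map_mod_nat,
    ← hs.map_mod_nat n, Nat.mul_mod]
  have hs4' : s 4 = 0 ∧ s 5 = -s 1 ∧ s 6 = -s 2 ∧ s 7 = -s 3 :=
    ⟨(hs4 0).trans (by rw [hs0, neg_zero]), hs4 1, hs4 2, hs4 3⟩
  have h8 : n % 8 < 8 := Nat.mod_lt n (by norm_num)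
  interval_cases n % 8 <;> simp only [χ₈'_nat_eq_if_mod_eight, hs0, hs1, hs2, hs3, hs4'] <;>
    norm_num <;> field_simp <;> norm_num

end ZMod

theorem hasSum_one_div_odd_sq :
    HasSum (fun k : ℕ ↦ 1 / ((2 * k + 1 : ℕ) : ℝ) ^ 2) (π ^ 2 / 8) := by
  set f : ℕ → ℝ := fun n ↦ 1 / (n : ℝ) ^ 2
  have heven : HasSum (fun k ↦ f (2 * k)) (π ^ 2 / 24) := by
    have hf : (fun k ↦ f (2 * k)) = fun k ↦ f k / 4 := funext fun k ↦ by
      simp only [f]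
      push_cast
      ring
    rw [hf, show π ^ 2 / 24 = π ^ 2 / 6 / 4 by ring]
    exact hasSum_zeta_two.div_const 4
  have hodd : Summable fun k ↦ f (2 * k + 1) :=
    hasSum_zeta_two.summable.comp_injective fun a b h ↦ by simpa using h
  have hsum := (heven.even_add_odd hodd.hasSum).unique hasSum_zeta_two
  convert hodd.hasSum using 1
  linarith

theorem hasSum_χ₈'_natCast_div_sq :
    HasSum (fun n : ℕ ↦ ((ZMod.χ₈' n : ℝ) / n) ^ 2) (π ^ 2 / 8) := by
  set f : ℕ → ℝ := fun n ↦ ((ZMod.χ₈' n : ℝ) / n) ^ 2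
  have heven : HasSum (fun k ↦ f (2 * k)) 0 := by
    have hf : (fun k ↦ f (2 * k)) = 0 := funext fun k ↦ by
      simp only [f, ZMod.χ₈'_natCast_eq_zero_of_even (even_two_mul k), Int.cast_zero, zero_div,
        sq, mul_zero, Pi.zero_apply]
    rw [hf]
    exact hasSum_zero
  have hodd : HasSum (fun k ↦ f (2 * k + 1)) (π ^ 2 / 8) := by
    have hf : (fun k ↦ f (2 * k + 1)) = fun k : ℕ ↦ 1 / ((2 * k + 1 : ℕ) : ℝ) ^ 2 :=
      funext fun k ↦ by
        simp only [f]
        rw [div_pow, ← Int.cast_pow, ZMod.χ₈'_natCast_sq_of_odd (odd_two_mul_add_one k),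
          Int.cast_one]
    rw [hf]
    exact hasSum_one_div_odd_sq
  simpa using heven.even_add_odd hodd

theorem tendsto_sum_range_χ₈'_natCast_div :
    Tendsto (fun n ↦ ∑ i ∈ range n, (ZMod.χ₈' i : ℝ) / i) atTop (𝓝 (π / (2 * √2))) := by
  obtain ⟨l, hl⟩ := ZMod.periodic_χ₈'_natCast.exists_tendsto_sum_range_div (by norm_num)
    ZMod.sum_range_eight_χ₈'_natCast
  suffices hval : Tendsto (fun x ↦ ∑' n : ℕ, (ZMod.χ₈' n : ℝ) / n * x ^ n) (𝓝[<] 1)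
      (𝓝 (π / (2 * √2))) by
    rwa [tendsto_nhds_unique (Real.tendsto_tsum_powerSeries_nhdsWithin_lt hl) hval] at hl
  have hθ₁ : π / 4 ∈ Set.Ioo 0 (2 * π) := ⟨by positivity, by linarith [Real.pi_pos]⟩
  have hθ₃ : 3 * π / 4 ∈ Set.Ioo 0 (2 * π) := ⟨by positivity, by linarith [Real.pi_pos]⟩
  have hlim := ((tendsto_arg_one_sub_mul_exp_mul_I hθ₁).neg.sub
    (tendsto_arg_one_sub_mul_exp_mul_I hθ₃)).div_const √2
  rw [show (-((π / 4 - π) / 2) - (3 * π / 4 - π) / 2) / √2 = π / (2 * √2) by ring] at hlim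
  refine (hlim.mono_left nhdsWithin_le_nhds).congr' ?_
  filter_upwards [Ioo_mem_nhdsLT (show (-1 : ℝ) < 1 by norm_num)] with x hx
  have hsum := ((hasSum_sin_mul_div_mul_pow (π / 4) (abs_lt.mpr hx)).add
    (hasSum_sin_mul_div_mul_pow (3 * π / 4) (abs_lt.mpr hx))).div_const √2
  rw [sub_eq_add_neg, ← hsum.tsum_eq]
  congr 1 with n
  rw [ZMod.χ₈'_natCast_eq_sin_add_sin]
  ring

theorem doubleLSumChiEight_eq (M : ℕ) :
    doubleLSumChiEight M = ((∑ n ∈ Icc 1 M, ∑ m ∈ Ico 1 n,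
      (ZMod.χ₈' m : ℝ) / m * ((ZMod.χ₈' n : ℝ) / n) : ℝ) : ℂ) := by
  simp only [doubleLSumChiEight, ofReal_sum, ofReal_mul, ofReal_div, ofReal_intCast,
    ofReal_natCast, div_mul_div_comm]
  rfl

/-- The double `L`-value `L^•_2({1}^2; {χ_{-8}}^2) = lim_{M→∞} ∑_{0<m<n≤M}
χ_{-8}(m)χ_{-8}(n)/(mn)` vanishes (Remark after Corollary 2.6). -/
theorem double_L_value_chi_eight_eq_zero :
    Tendsto doubleLSumChiEight atTop (𝓝 0) := by
  set a : ℕ → ℝ := fun n ↦ (ZMod.χ₈' n : ℝ) / n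
  have hS := tendsto_sum_range_χ₈'_natCast_div.comp (tendsto_add_atTop_nat 1)
  have hD := hasSum_χ₈'_natCast_div_sq.tendsto_sum_nat.comp (tendsto_add_atTop_nat 1)
  have hval : ((π / (2 * √2)) ^ 2 - π ^ 2 / 8) / 2 = 0 := by
    rw [div_pow, mul_pow, Real.sq_sqrt zero_le_two]
    ring
  have hlim := ((hS.pow 2).sub hD).div_const 2
  rw [hval] at hlim
  have hdouble (M : ℕ) : ∑ n ∈ Icc 1 M, ∑ m ∈ Ico 1 n, a m * a n =
      ((∑ i ∈ range (M + 1), a i) ^ 2 - ∑ i ∈ range (M + 1), a i ^ 2) / 2 := by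
    rw [← sum_Icc_one_eq_sum_range_succ (by simp [a]), ← sum_Icc_one_eq_sum_range_succ
      (f := fun i ↦ a i ^ 2) (by simp [a]), ← two_mul_sum_Icc_sum_Ico_mul]
    ring
  have hC := (continuous_ofReal.tendsto 0).comp hlim
  rw [ofReal_zero] at hC
  refine hC.congr fun M ↦ ?_
  rw [doubleLSumChiEight_eq, hdouble]
  rfl
end
end

section
/- For every integer k ≥ 1, the Bernoulli number B_{2k} satisfies B_{2k} = (2k)! / (2^{2k−1} (3k)!) · Σ_{n_1+⋯+n_k = k, n_i ≥ 0} multinomial(3k; 2n_1+1, …, 2n_k+1) · ζ_k^{Σ_{l=1}^{k} l·n_l}, where ζ_k := e^{2πi/k}. -/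
/-!
Put `g(x) = sinh √x / √x = ∑ xⁿ / (2n+1)!`. Since `(2n_l+1)!⁻¹ ζ^{l n_l}` is the coefficient
of `x^{n_l}` in `g(ζˡ x)`, the sum is `(3k)!` times the coefficient of `xᵏ` in
`P(x) = ∏_{l=1}^k g(ζˡ x)`.
Expanding `B(2t) (eᵗ - e⁻ᵗ) = 2t eᵗ` in odd degrees gives
`g'/g = (√x coth √x - 1) / (2x) = ∑ⱼ 2^{2j+1} B_{2j+2} xʲ / (2j+2)!`, so the `j`-th coefficient of
`P'/P` is that of `g'/g` times `∑_l ζ^{l(j+1)}`, which is `0` for `j < k - 1` and `k` for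
`j = k - 1`. Comparing the coefficients of `x^{k-1}` in `P' = (P'/P) P` gives
`[xᵏ] P = 2^{2k-1} B_{2k} / (2k)!`.
-/

open Finset PowerSeries Nat

theorem Nat.cast_multinomial {K : Type*} [Field K] [CharZero K] {α : Type*} (s : Finset α)
    (f : α → ℕ) : (Nat.multinomial s f : K) = (∑ i ∈ s, f i)! / ∏ i ∈ s, ((f i)! : K) := by
  rw [eq_div_iff (prod_ne_zero_iff.mpr fun i _ ↦ Nat.cast_ne_zero.mpr (Nat.factorial_ne_zero _)),
    mul_comm]
  exact_mod_cast Nat.multinomial_spec s f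

theorem Finset.sum_range_two_mul {M : Type*} [AddCommMonoid M] (f : ℕ → M) (n : ℕ) :
    ∑ i ∈ range (2 * n), f i = ∑ i ∈ range n, (f (2 * i) + f (2 * i + 1)) := by
  induction n with
  | zero => simp
  | succ n ih => rw [mul_add_one, sum_range_succ, sum_range_succ, sum_range_succ, ih, add_assoc]

theorem Finset.sum_finsuppAntidiag_eq_sum_piAntidiag {ι μ M : Type*} [DecidableEq ι]
    [AddCommMonoid μ] [HasAntidiagonal μ] [DecidableEq μ] [AddCommMonoid M]
    (s : Finset ι) (n : μ) (F : (ι → μ) → M) :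
    ∑ l ∈ finsuppAntidiag s n, F l = ∑ f ∈ piAntidiag s n, F f := by
  rw [finsuppAntidiag, sum_map]
  exact sum_attach (piAntidiag s n) F

theorem IsPrimitiveRoot.sum_fin_pow_succ_pow_eq_zero {R : Type*} [CommRing R] [IsDomain R]
    {ζ : R} {k m : ℕ} (hζ : IsPrimitiveRoot ζ k) (hm : 0 < m) (hmk : m < k) :
    ∑ i : Fin k, (ζ ^ (i + 1 : ℕ)) ^ m = 0 := by
  have hne : ζ ^ m - 1 ≠ 0 := sub_ne_zero.mpr (hζ.pow_ne_one_of_pos_of_lt hm.ne' hmk)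
  have hgeom : ∑ i ∈ range k, (ζ ^ m) ^ i = 0 := by
    refine (_root_.mul_eq_zero.mp ?_).resolve_right hne
    rw [geom_sum_mul, ← pow_mul, mul_comm, pow_mul, hζ.pow_eq_one, one_pow, sub_self]
  calc ∑ i : Fin k, (ζ ^ (i + 1 : ℕ)) ^ m = ζ ^ m * ∑ i ∈ range k, (ζ ^ m) ^ i := by
        rw [Fin.sum_univ_eq_sum_range (fun i ↦ (ζ ^ (i + 1)) ^ m), mul_sum]
        exact sum_congr rfl fun i _ ↦ by ring
    _ = 0 := by rw [hgeom, mul_zero]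

namespace PowerSeries

variable {R : Type*} [CommSemiring R]

theorem derivative_rescale (a : R) (f : R⟦X⟧) :
    d⁄dX R (rescale a f) = C a * rescale a (d⁄dX R f) := by
  ext n
  rw [coeff_derivative, coeff_C_mul, coeff_rescale, coeff_rescale, coeff_derivative, pow_succ]
  ring

theorem derivative_prod_of_derivative_eq_mul {ι : Type*} (s : Finset ι) (f e : ι → R⟦X⟧)
    (h : ∀ i ∈ s, d⁄dX R (f i) = e i * f i) :
    d⁄dX R (∏ i ∈ s, f i) = (∑ i ∈ s, e i) * ∏ i ∈ s, f i := by
  induction s using Finset.cons_induction with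
  | empty => simp
  | cons a s ha ih =>
    rw [prod_cons, Derivation.leibniz, smul_eq_mul, smul_eq_mul,
      ih fun i hi ↦ h i (mem_cons_of_mem hi), h a (mem_cons_self a s), sum_cons]
    ring

theorem succ_mul_coeff_succ_of_derivative_eq_mul {f D : R⟦X⟧} (h : d⁄dX R f = D * f) {n : ℕ}
    (hD : ∀ j < n, coeff j D = 0) : (n + 1) * coeff (n + 1) f = coeff n D * constantCoeff f := by
  have := congrArg (coeff n) h
  rw [coeff_derivative, coeff_mul, sum_eq_single (n, 0)] at this
  · rw [mul_comm, this, coeff_zero_eq_constantCoeff_apply]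
  · rintro ⟨i, j⟩ hij hne
    rw [HasAntidiagonal.mem_antidiagonal] at hij
    rw [hD i (by grind), zero_mul]
  · simp

theorem coeff_prod_fin {k : ℕ} (f : Fin k → R⟦X⟧) (n : ℕ) :
    coeff n (∏ i, f i) = ∑ t ∈ Finset.Nat.antidiagonalTuple k n, ∏ i, coeff (t i) (f i) := by
  rw [coeff_prod, sum_finsuppAntidiag_eq_sum_piAntidiag _ _ fun t ↦ ∏ i, coeff (t i) (f i),
    piAntidiag_univ_fin_eq_antidiagonalTuple]

theorem coeff_prod_rescale_pow_of_isPrimitiveRoot {K : Type*} [CommRing K] [IsDomain K] [CharZero K]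
    {ζ : K} {k : ℕ} (hζ : IsPrimitiveRoot ζ k) (hk : 0 < k) {g D : K⟦X⟧}
    (hg : d⁄dX K g = D * g) (hg0 : constantCoeff g = 1) :
    coeff k (∏ i : Fin k, rescale (ζ ^ (i + 1 : ℕ)) g) = coeff (k - 1) D := by
  set E := ∑ i : Fin k, C (ζ ^ (i + 1 : ℕ)) * rescale (ζ ^ (i + 1 : ℕ)) D with hE_def
  have hder : d⁄dX K (∏ i : Fin k, rescale (ζ ^ (i + 1 : ℕ)) g) =
      E * ∏ i : Fin k, rescale (ζ ^ (i + 1 : ℕ)) g :=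
    derivative_prod_of_derivative_eq_mul _ _ _ fun i _ ↦ by
      rw [derivative_rescale, hg, map_mul, mul_assoc]
  have hE (j : ℕ) : coeff j E = (∑ i : Fin k, (ζ ^ (i + 1 : ℕ)) ^ (j + 1)) * coeff j D := by
    rw [hE_def, map_sum, sum_mul]
    exact sum_congr rfl fun i _ ↦ by rw [coeff_C_mul, coeff_rescale, pow_succ]; ring
  obtain ⟨n, rfl⟩ : ∃ n, k = n + 1 := Nat.exists_eq_add_one.mpr hk
  have hroots : ∑ i : Fin (n + 1), (ζ ^ (i + 1 : ℕ)) ^ (n + 1) = n + 1 := by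
    have hone (i : ℕ) : (ζ ^ (i + 1)) ^ (n + 1) = 1 := by
      rw [← pow_mul, mul_comm, pow_mul, hζ.pow_eq_one, one_pow]
    simp [hone]
  have hconst : constantCoeff (∏ i : Fin (n + 1), rescale (ζ ^ (i + 1 : ℕ)) g) = 1 := by
    simp [map_prod, ← coeff_zero_eq_constantCoeff_apply, coeff_rescale, hg0]
  have key := succ_mul_coeff_succ_of_derivative_eq_mul hder (n := n) fun j hj ↦ by
    rw [hE, hζ.sum_fin_pow_succ_pow_eq_zero j.succ_pos (by omega), zero_mul]
  rw [hE, hroots, hconst, mul_one] at key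
  exact mul_left_cancel₀ (Nat.cast_add_one_ne_zero n) key

theorem rescale_two_bernoulli'PowerSeries_mul_exp_sub_exp_neg {A : Type*} [CommRing A]
    [Algebra ℚ A] :
    rescale 2 (bernoulli'PowerSeries A) * (exp A - rescale (-1) (exp A)) = 2 * X * exp A := by
  have hexp : rescale (-1 : A) (exp A) * rescale 2 (exp A) = exp A := by
    rw [exp_mul_exp_eq_exp_add]; norm_num
  have hbern : rescale (2 : A) (bernoulli'PowerSeries A) * (rescale 2 (exp A) - 1) =
      2 * X * rescale 2 (exp A) := by
    rw [← map_one (rescale (2 : A)), ← map_sub, ← map_mul, bernoulli'PowerSeries_mul_exp_sub_one,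
      map_mul, rescale_X, map_ofNat]
  have hsinh : exp A - rescale (-1) (exp A) = rescale (-1) (exp A) * (rescale 2 (exp A) - 1) := by
    rw [mul_sub, hexp, mul_one]
  rw [hsinh, mul_left_comm, hbern]
  linear_combination 2 * X * hexp

variable (K : Type*) [Field K]

/-- `sinh √x / √x`. -/
noncomputable def sinhSqrtDivSqrt : K⟦X⟧ :=
  mk fun n ↦ ((2 * n + 1)! : K)⁻¹

/-- `(√x coth √x - 1) / (2x)`. -/
noncomputable def sinhSqrtDivSqrtLogDeriv : K⟦X⟧ :=
  mk fun n ↦ 2 ^ (2 * n + 1) * bernoulli' (2 * n + 2) / (2 * n + 2)!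

variable {K}

theorem coeff_rescale_two_bernoulli'PowerSeries [CharZero K] (n : ℕ) :
    coeff n (rescale 2 (bernoulli'PowerSeries K)) = 2 ^ n * bernoulli' n / n ! := by
  rw [coeff_rescale, bernoulli'PowerSeries, coeff_mk, eq_ratCast]
  push_cast
  ring

theorem coeff_exp_sub_exp_neg [CharZero K] (n : ℕ) :
    coeff n (exp K - rescale (-1) (exp K)) = (1 - (-1) ^ n) / n ! := by
  rw [map_sub, coeff_rescale, coeff_exp, eq_ratCast]
  push_cast
  ring

theorem coeff_two_mul_add_one_mul_exp_sub_exp_neg [CharZero K] (f : K⟦X⟧) (n : ℕ) :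
    coeff (2 * n + 1) (f * (exp K - rescale (-1) (exp K))) =
      2 * ∑ p ∈ antidiagonal n, coeff (2 * p.1) f / (2 * p.2 + 1)! := by
  rw [coeff_mul, Nat.sum_antidiagonal_eq_sum_range_succ_mk,
    Nat.sum_antidiagonal_eq_sum_range_succ_mk, show (2 * n + 1).succ = 2 * (n + 1) by omega,
    sum_range_two_mul, mul_sum]
  refine sum_congr rfl fun i hi ↦ ?_
  have hi : i ≤ n := Nat.lt_succ_iff.mp (mem_range.mp hi)
  simp only [coeff_exp_sub_exp_neg]
  rw [show 2 * n + 1 - 2 * i = 2 * (n - i) + 1 by omega,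
    show 2 * n + 1 - (2 * i + 1) = 2 * (n - i) by omega, Odd.neg_one_pow (odd_two_mul_add_one _),
    Even.neg_one_pow (even_two_mul _)]
  ring

theorem sum_antidiagonal_bernoulli'_div_factorial [CharZero K] (n : ℕ) :
    ∑ p ∈ antidiagonal n,
        2 ^ (2 * p.1 + 1) * bernoulli' (2 * p.1 + 2) / (2 * p.1 + 2)! * ((2 * p.2 + 1)! : K)⁻¹ =
      (n + 1) * ((2 * n + 3)! : K)⁻¹ := by
  have h := congrArg (coeff (2 * (n + 1) + 1))
    (rescale_two_bernoulli'PowerSeries_mul_exp_sub_exp_neg (A := K))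
  rw [coeff_two_mul_add_one_mul_exp_sub_exp_neg, Nat.sum_antidiagonal_succ, ← map_ofNat C 2,
    mul_assoc, coeff_C_mul, coeff_succ_X_mul, coeff_exp, eq_ratCast] at h
  have hshift : ∑ p ∈ antidiagonal n,
      coeff (2 * (p.1 + 1)) (rescale 2 (bernoulli'PowerSeries K)) / (2 * p.2 + 1)! =
        2 * ∑ p ∈ antidiagonal n, 2 ^ (2 * p.1 + 1) * bernoulli' (2 * p.1 + 2) / (2 * p.1 + 2)! *
          ((2 * p.2 + 1)! : K)⁻¹ := by
    rw [mul_sum]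
    refine sum_congr rfl fun p _ ↦ ?_
    rw [coeff_rescale_two_bernoulli'PowerSeries, Nat.mul_add_one, pow_succ]
    ring
  rw [hshift, coeff_rescale_two_bernoulli'PowerSeries] at h
  generalize (∑ p ∈ antidiagonal n, _ : K) = S at h ⊢
  norm_num at h
  have hfact : ((2 * n + 3)! : K) = (2 * n + 3) * (2 * n + 2)! := by
    rw [show 2 * n + 3 = 2 * n + 2 + 1 by ring, Nat.factorial_succ]; push_cast; ring
  have h3 : (2 * n + 3 : K) ≠ 0 := by norm_cast
  have hF : ((2 * n + 2)! : K) ≠ 0 := Nat.cast_ne_zero.mpr (Nat.factorial_ne_zero _)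
  rw [show 2 * (n + 1) + 1 = 2 * n + 3 by ring, Nat.mul_add_one, hfact] at h
  rw [hfact]
  field_simp at h ⊢
  linear_combination h / 2

theorem derivative_sinhSqrtDivSqrt [CharZero K] :
    d⁄dX K (sinhSqrtDivSqrt K) = sinhSqrtDivSqrtLogDeriv K * sinhSqrtDivSqrt K := by
  ext n
  rw [coeff_derivative, coeff_mul, sinhSqrtDivSqrt, sinhSqrtDivSqrtLogDeriv]
  simp only [coeff_mk]
  rw [sum_antidiagonal_bernoulli'_div_factorial]
  ring

theorem constantCoeff_sinhSqrtDivSqrt : constantCoeff (sinhSqrtDivSqrt K) = 1 := by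
  simp [sinhSqrtDivSqrt, ← coeff_zero_eq_constantCoeff_apply]

end PowerSeries

/-- **Formula (4.4)**: for every `k ≥ 1`,
`B_{2k} = (2k)!/(2^{2k-1}(3k)!) Σ_{n_1+⋯+n_k=k} multinomial(3k; 2n_1+1,…,2n_k+1)
ζ_k^{Σ_l l n_l}`, where `ζ_k = e^{2πi/k}` and `B` is the Bernoulli number
(convention `t e^t/(e^t-1)`, which agrees with all conventions in even degree). -/
theorem bernoulli_multinomial_root_of_unity_sum (k : ℕ) (hk : 1 ≤ k) :
    (bernoulli' (2 * k) : ℂ) =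
      ((2 * k).factorial : ℂ) / (2 ^ (2 * k - 1) * ((3 * k).factorial : ℂ)) *
        ∑ f ∈ Finset.Nat.antidiagonalTuple k k,
          (Nat.multinomial Finset.univ (fun i => 2 * f i + 1) : ℂ) *
            Complex.exp (2 * Real.pi * Complex.I / k) ^ (∑ i : Fin k, ((i : ℕ) + 1) * f i) := by
  set ζ := Complex.exp (2 * Real.pi * Complex.I / k)
  have hζ : IsPrimitiveRoot ζ k := Complex.isPrimitiveRoot_exp k (by omega)
  have hcoeff := coeff_prod_rescale_pow_of_isPrimitiveRoot hζ hk derivative_sinhSqrtDivSqrt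
    constantCoeff_sinhSqrtDivSqrt
  simp only [coeff_prod_fin, coeff_rescale, sinhSqrtDivSqrt, sinhSqrtDivSqrtLogDeriv, coeff_mk,
    show 2 * (k - 1) + 1 = 2 * k - 1 by omega, show 2 * (k - 1) + 2 = 2 * k by omega] at hcoeff
  have hterm : ∀ f ∈ Finset.Nat.antidiagonalTuple k k,
      (Nat.multinomial Finset.univ (fun i => 2 * f i + 1) : ℂ) *
          ζ ^ (∑ i : Fin k, ((i : ℕ) + 1) * f i) =
        (3 * k)! * ∏ i : Fin k, (ζ ^ (i + 1 : ℕ)) ^ f i * ((2 * f i + 1)! : ℂ)⁻¹ := by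
    intro f hf
    have hsum : ∑ i, (2 * f i + 1) = 3 * k := by
      rw [sum_add_distrib, ← mul_sum, Finset.Nat.mem_antidiagonalTuple.mp hf, sum_const,
        Finset.card_univ, Fintype.card_fin, smul_eq_mul]
      ring
    rw [Nat.cast_multinomial, hsum, prod_mul_distrib, prod_inv_distrib, div_eq_mul_inv]
    simp only [← pow_mul, prod_pow_eq_pow_sum]
    ring
  rw [sum_congr rfl hterm, ← mul_sum, hcoeff]
  have h2k : ((2 * k)! : ℂ) ≠ 0 := Nat.cast_ne_zero.mpr (Nat.factorial_ne_zero _)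
  have h3k : ((3 * k)! : ℂ) ≠ 0 := Nat.cast_ne_zero.mpr (Nat.factorial_ne_zero _)
  field_simp
end

section
/- For every integer k ≥ 1, the Bernoulli number B_{2k} satisfies B_{2k} = 1 / (2^{2k−1} (2^{2k} − 1)) · Σ_{n_1+⋯+n_k = k, n_i ≥ 0} multinomial(2k; 2n_1, …, 2n_k) · ζ_k^{Σ_{l=1}^{k} l·n_l}, where ζ_k := e^{2πi/k}. -/
open Complex Finset

/-!
Put `w = e^{πi/k}`, so that `w² = ζ_k` and `w` is a primitive `2k`-th root of unity. Expanding
`G = ∏_{l=1}^k cosh (w^l X)` shows that the sum is `(2k)!` times the coefficient of `X^{2k}` in `G`.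
Logarithmic differentiation gives `X G' = Q G` with `Q = ∑_l w^l X tanh (w^l X)`, and
`x tanh x = B(4x) - B(2x) - x` for the Bernoulli generating function `B(x) = x eˣ/(eˣ - 1)`.
Hence the coefficient of `X^n` in `Q` is `(4ⁿ - 2ⁿ) B_n/n!` times `∑_l (wⁿ)^l`, which vanishes for
`0 < n < 2k` by orthogonality of roots of unity (odd `n` are killed by `B_n = 0`), and is `k` times
`(4^{2k} - 2^{2k}) B_{2k}/(2k)!` for `n = 2k`. Comparing coefficients of `X^{2k}` in `X G' = Q G`
then determines the coefficient of `X^{2k}` in `G`.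
-/

theorem Derivation.mul_apply_prod_eq_sum_mul_prod {R A ι : Type*} [CommSemiring R]
    [CommSemiring A] [Algebra R A] (D : Derivation R A A) (x : A) (s : Finset ι) (f g : ι → A)
    (h : ∀ i ∈ s, x * D (f i) = g i * f i) :
    x * D (∏ i ∈ s, f i) = (∑ i ∈ s, g i) * ∏ i ∈ s, f i := by
  classical
  induction s using Finset.induction with
  | empty => simp
  | insert j s hj ih =>
    rw [prod_insert hj, sum_insert hj, D.leibniz, smul_eq_mul, smul_eq_mul]
    have hs := ih fun i hi => h i (mem_insert_of_mem hi)
    calc x * (f j * D (∏ i ∈ s, f i) + (∏ i ∈ s, f i) * D (f j))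
        = f j * (x * D (∏ i ∈ s, f i)) + (∏ i ∈ s, f i) * (x * D (f j)) := by ring
      _ = _ := by rw [hs, h j (mem_insert_self j s)]; ring

theorem sum_fin_pow_succ_eq_zero {R : Type*} [CommRing R] [IsDomain R] {x : R} {k : ℕ}
    (hx : x ^ k = 1) (hx1 : x ≠ 1) : ∑ i : Fin k, x ^ ((i : ℕ) + 1) = 0 := by
  have hgeom : ∑ i ∈ range k, x ^ i = 0 :=
    eq_zero_of_ne_zero_of_mul_left_eq_zero (sub_ne_zero_of_ne hx1.symm)
      (by rw [mul_neg_geom_sum, hx, sub_self])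
  rw [Fin.sum_univ_eq_sum_range (fun i => x ^ (i + 1))]
  simp only [pow_succ', ← mul_sum, hgeom, mul_zero]

namespace PowerSeries

section CommSemiring

variable {R : Type*} [CommSemiring R]

theorem coeff_X_mul_derivative (f : R⟦X⟧) (n : ℕ) :
    coeff n (X * d⁄dX R f) = n * coeff n f := by
  cases n with
  | zero => simp
  | succ n => rw [coeff_succ_X_mul, coeff_derivative, mul_comm, Nat.cast_succ]

theorem coeff_mul_of_forall_lt_coeff_eq_zero {f : R⟦X⟧} {N : ℕ}
    (hf : ∀ n < N, coeff n f = 0) (g : R⟦X⟧) : coeff N (f * g) = coeff N f * constantCoeff g := by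
  obtain ⟨f, rfl⟩ := X_pow_dvd_iff.2 hf
  rw [mul_assoc, coeff_X_pow_mul', coeff_X_pow_mul', if_pos le_rfl, if_pos le_rfl, Nat.sub_self,
    coeff_zero_eq_constantCoeff_apply, coeff_zero_eq_constantCoeff_apply, map_mul]

end CommSemiring

variable {K : Type*} [Field K] [CharZero K]

theorem coeff_rescale_exp (a : K) (n : ℕ) :
    coeff n (rescale a (exp K)) = a ^ n / n.factorial := by
  simp [coeff_rescale, div_eq_mul_inv]

theorem rescale_exp_ne_one {a : K} (ha : a ≠ 0) : rescale a (exp K) ≠ 1 := by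
  intro h
  simpa [coeff_rescale_exp, ha] using congrArg (coeff 1) h

theorem derivative_rescale_exp (a : K) :
    d⁄dX K (rescale a (exp K)) = C a * rescale a (exp K) := by
  ext n
  simp only [coeff_derivative, coeff_C_mul, coeff_rescale_exp, Nat.factorial_succ]
  push_cast
  field_simp
  ring

theorem rescale_bernoulli'PowerSeries_mul (c : K) :
    rescale c (bernoulli'PowerSeries K) * (rescale c (exp K) - 1) =
      C c * X * rescale c (exp K) := by
  simpa [rescale_X] using congrArg (rescale c) (bernoulli'PowerSeries_mul_exp_sub_one K)

theorem coeff_rescale_bernoulli'PowerSeries (c : K) (n : ℕ) :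
    coeff n (rescale c (bernoulli'PowerSeries K)) = c ^ n * (bernoulli' n / n.factorial) := by
  simp [coeff_rescale, bernoulli'PowerSeries]

noncomputable def coshX (a : K) : K⟦X⟧ := C (2⁻¹ : K) * (rescale a (exp K) + rescale (-a) (exp K))

noncomputable def sinhX (a : K) : K⟦X⟧ := C (2⁻¹ : K) * (rescale a (exp K) - rescale (-a) (exp K))

-- `a X tanh (a X)`, through `x tanh x = B(4x) - B(2x) - x` for `B(x) = x eˣ/(eˣ - 1)`.
noncomputable def xTanhX (a : K) : K⟦X⟧ :=
  rescale (4 * a) (bernoulli'PowerSeries K) - rescale (2 * a) (bernoulli'PowerSeries K) - C a * X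

theorem C_mul_X_mul_sinhX {a : K} (ha : a ≠ 0) : C a * X * sinhX a = xTanhX a * coshX a := by
  set e := rescale a (exp K)
  have he : e * rescale (-a) (exp K) = 1 := by simp [e, exp_mul_exp_eq_exp_add]
  have h2 : rescale (2 * a) (exp K) = e ^ 2 := by rw [two_mul, ← exp_mul_exp_eq_exp_add, sq]
  have h4 : rescale (4 * a) (exp K) = e ^ 4 := by
    rw [show 4 * a = 2 * a + 2 * a by ring, ← exp_mul_exp_eq_exp_add, h2]; ring
  have hB2 := rescale_bernoulli'PowerSeries_mul (2 * a)
  have hB4 := rescale_bernoulli'PowerSeries_mul (4 * a)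
  rw [h2, map_mul, map_ofNat] at hB2
  rw [h4, map_mul, map_ofNat] at hB4
  have hne : (e ^ 2 - 1) * (e ^ 4 - 1) ≠ 0 := by
    refine mul_ne_zero ?_ ?_ <;> rw [sub_ne_zero]
    · rw [← h2]; exact rescale_exp_ne_one (by simpa using ha)
    · rw [← h4]; exact rescale_exp_ne_one (by simpa using ha)
  apply mul_right_cancel₀ hne
  simp only [sinhX, coshX, xTanhX]
  linear_combination (-(C 2⁻¹ * (e + rescale (-a) (exp K)) * (e ^ 2 - 1))) * hB4 +
    (C 2⁻¹ * (e + rescale (-a) (exp K)) * (e ^ 4 - 1)) * hB2 +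
    (-(2 * e * (e ^ 2 - 1) ^ 2 * C a * X * C 2⁻¹)) * he

theorem X_mul_derivative_coshX {a : K} (ha : a ≠ 0) :
    X * d⁄dX K (coshX a) = xTanhX a * coshX a := by
  have hD : d⁄dX K (coshX a) = C a * sinhX a := by
    simp only [coshX, sinhX, Derivation.leibniz, derivative_C, map_add, derivative_rescale_exp,
      smul_eq_mul, map_neg]
    ring
  rw [hD, ← C_mul_X_mul_sinhX ha]
  ring

theorem coeff_coshX (a : K) (n : ℕ) :
    coeff n (coshX a) = if Even n then a ^ n / n.factorial else 0 := by
  rw [coshX, coeff_C_mul, map_add, coeff_rescale_exp, coeff_rescale_exp]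
  rcases Nat.even_or_odd n with h | h
  · rw [if_pos h, h.neg_pow]; ring
  · rw [if_neg (Nat.not_even_iff_odd.2 h), h.neg_pow]; ring

theorem constantCoeff_coshX (a : K) : constantCoeff (coshX a) = 1 := by
  simp [← coeff_zero_eq_constantCoeff_apply, coeff_coshX]

theorem coeff_xTanhX_of_ne_one (a : K) {n : ℕ} (hn : n ≠ 1) :
    coeff n (xTanhX a) = (4 ^ n - 2 ^ n) * (bernoulli' n / n.factorial) * a ^ n := by
  simp only [xTanhX, map_sub, coeff_rescale_bernoulli'PowerSeries, coeff_C_mul, coeff_X, if_neg hn]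
  ring

theorem coeff_one_xTanhX (a : K) : coeff 1 (xTanhX a) = 0 := by
  simp only [xTanhX, map_sub, coeff_rescale_bernoulli'PowerSeries, coeff_C_mul, coeff_X, if_pos,
    bernoulli'_one, Nat.factorial_one]
  push_cast
  ring

theorem coeff_xTanhX_of_odd (a : K) {n : ℕ} (hn : Odd n) : coeff n (xTanhX a) = 0 := by
  obtain rfl | hn1 := eq_or_ne n 1
  · exact coeff_one_xTanhX a
  · rw [coeff_xTanhX_of_ne_one a hn1, bernoulli'_eq_zero_of_odd hn (by grind)]
    simp

theorem coeff_two_mul_prod_coshX_eq_sum {k : ℕ} (b : Fin k → K) (n : ℕ) :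
    coeff (2 * n) (∏ i, coshX (b i)) =
      ∑ f ∈ Nat.antidiagonalTuple k n, ∏ i, b i ^ (2 * f i) / (2 * f i).factorial := by
  classical
  let double (f : Fin k → ℕ) : Fin k →₀ ℕ := Finsupp.equivFunOnFinite.symm fun i => 2 * f i
  rw [coeff_prod]
  refine (sum_of_injOn double ?_ ?_ ?_ ?_).symm
  · intro f _ g _ hfg
    funext i
    simpa [double] using DFunLike.congr_fun hfg i
  · intro f hf
    simp [double, ← mul_sum, Nat.mem_antidiagonalTuple.1 (mem_coe.1 hf)]
  · intro l hl hnot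
    by_contra hprod
    have heven (i : Fin k) : Even (l i) := by
      by_contra hodd
      exact hprod (prod_eq_zero (mem_univ i) (by rw [coeff_coshX, if_neg hodd]))
    refine hnot ⟨fun i => l i / 2, ?_, ?_⟩
    · rw [mem_coe, Nat.mem_antidiagonalTuple]
      have hsum : 2 * ∑ i, l i / 2 = 2 * n := by
        rw [mul_sum, ← (mem_finsuppAntidiag.1 hl).1]
        exact sum_congr rfl fun i _ => Nat.two_mul_div_two_of_even (heven i)
      omega
    · ext i
      simp [double, Nat.two_mul_div_two_of_even (heven i)]
  · intro f _
    simp [double, coeff_coshX]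

variable {w : K} {k : ℕ}

theorem coeff_sum_xTanhX_of_ne_one {n : ℕ} (hn : n ≠ 1) :
    coeff n (∑ i : Fin k, xTanhX (w ^ ((i : ℕ) + 1))) =
      (4 ^ n - 2 ^ n) * (bernoulli' n / n.factorial) * ∑ i : Fin k, (w ^ n) ^ ((i : ℕ) + 1) := by
  simp only [map_sum, coeff_xTanhX_of_ne_one _ hn, mul_sum, ← pow_mul, mul_comm n]

theorem coeff_sum_xTanhX_of_lt (hw : IsPrimitiveRoot w (2 * k)) {n : ℕ} (hn : n < 2 * k) :
    coeff n (∑ i : Fin k, xTanhX (w ^ ((i : ℕ) + 1))) = 0 := by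
  obtain ⟨m, rfl | rfl⟩ := Nat.even_or_odd' n
  · obtain rfl | hm := eq_or_ne m 0
    · rw [coeff_sum_xTanhX_of_ne_one (by omega)]
      simp
    have hroot : (w ^ (2 * m)) ^ k = 1 := by
      rw [← pow_mul, mul_right_comm, pow_mul, hw.pow_eq_one, one_pow]
    rw [coeff_sum_xTanhX_of_ne_one (by omega),
      sum_fin_pow_succ_eq_zero hroot (hw.pow_ne_one_of_pos_of_lt (by omega) hn), mul_zero]
  · simp [map_sum, coeff_xTanhX_of_odd _ (odd_two_mul_add_one m)]

theorem coeff_two_mul_sum_xTanhX (hw : IsPrimitiveRoot w (2 * k)) :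
    coeff (2 * k) (∑ i : Fin k, xTanhX (w ^ ((i : ℕ) + 1))) =
      k * ((4 ^ (2 * k) - 2 ^ (2 * k)) * (bernoulli' (2 * k) / (2 * k).factorial)) := by
  rw [coeff_sum_xTanhX_of_ne_one (by omega), hw.pow_eq_one]
  simp [mul_comm]

theorem coeff_two_mul_prod_coshX (hk : k ≠ 0) (hw : IsPrimitiveRoot w (2 * k)) :
    coeff (2 * k) (∏ i : Fin k, coshX (w ^ ((i : ℕ) + 1))) =
      2 ^ (2 * k - 1) * (2 ^ (2 * k) - 1) * (bernoulli' (2 * k) / (2 * k).factorial) := by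
  have hw0 : w ≠ 0 := hw.ne_zero (by omega)
  have hODE := congrArg (coeff (2 * k)) <| (d⁄dX K).mul_apply_prod_eq_sum_mul_prod X univ
    (fun i : Fin k => coshX (w ^ ((i : ℕ) + 1))) (fun i => xTanhX (w ^ ((i : ℕ) + 1)))
    fun i _ => X_mul_derivative_coshX (pow_ne_zero _ hw0)
  rw [coeff_X_mul_derivative, coeff_mul_of_forall_lt_coeff_eq_zero
    (fun n hn => coeff_sum_xTanhX_of_lt hw hn), coeff_two_mul_sum_xTanhX hw] at hODE
  simp only [map_prod (constantCoeff (R := K)), constantCoeff_coshX, prod_const_one,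
    mul_one] at hODE
  have h4 : (4 : K) ^ (2 * k) = 2 ^ (2 * k) * 2 ^ (2 * k) := by rw [← mul_pow]; norm_num
  have h2 : (2 : K) ^ (2 * k) = 2 * 2 ^ (2 * k - 1) := by rw [← pow_succ']; congr 1; omega
  apply mul_left_cancel₀ (show (2 * k : K) ≠ 0 by simp [hk])
  push_cast at hODE
  rw [hODE, h4, h2]
  ring

end PowerSeries

open PowerSeries in
theorem sum_multinomial_mul_pow_eq_bernoulli' {K : Type*} [Field K] [CharZero K] {w : K} {k : ℕ}
    (hk : k ≠ 0) (hw : IsPrimitiveRoot w (2 * k)) :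
    ∑ f ∈ Nat.antidiagonalTuple k k,
        (Nat.multinomial univ (fun i => 2 * f i) : K) * (w ^ 2) ^ (∑ i : Fin k, ((i : ℕ) + 1) * f i) =
      2 ^ (2 * k - 1) * (2 ^ (2 * k) - 1) * bernoulli' (2 * k) := by
  have hterm : ∀ f ∈ Nat.antidiagonalTuple k k,
      (Nat.multinomial univ (fun i => 2 * f i) : K) * (w ^ 2) ^ (∑ i : Fin k, ((i : ℕ) + 1) * f i) =
        (2 * k).factorial * ∏ i : Fin k, (w ^ ((i : ℕ) + 1)) ^ (2 * f i) / (2 * f i).factorial := by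
    intro f hf
    have hspec : ((∏ i, (2 * f i).factorial : ℕ) : K) * Nat.multinomial univ (fun i => 2 * f i) =
        (2 * k).factorial := by
      have hspec := Nat.multinomial_spec univ (fun i => 2 * f i)
      rw [← mul_sum, Nat.mem_antidiagonalTuple.1 hf] at hspec
      exact_mod_cast hspec
    have hpow : (w ^ 2) ^ (∑ i : Fin k, ((i : ℕ) + 1) * f i) =
        ∏ i : Fin k, (w ^ ((i : ℕ) + 1)) ^ (2 * f i) := by
      rw [← prod_pow_eq_pow_sum]
      exact prod_congr rfl fun i _ => by ring
    have hfac : ∏ i, ((2 * f i).factorial : K) ≠ 0 :=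
      prod_ne_zero_iff.2 fun i _ => Nat.cast_ne_zero.2 (Nat.factorial_ne_zero _)
    rw [prod_div_distrib, hpow, ← hspec]
    push_cast
    field_simp
  rw [sum_congr rfl hterm, ← mul_sum, ← coeff_two_mul_prod_coshX_eq_sum,
    coeff_two_mul_prod_coshX hk hw]
  field_simp [Nat.factorial_ne_zero]

/-- **Formula (4.5)**: for every `k ≥ 1`,
`B_{2k} = 1/(2^{2k-1}(2^{2k}-1)) Σ_{n_1+⋯+n_k=k} multinomial(2k; 2n_1,…,2n_k)
ζ_k^{Σ_l l n_l}`, where `ζ_k = e^{2πi/k}` and `B` is the Bernoulli number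
(convention `t e^t/(e^t-1)`, which agrees with all conventions in even degree). -/
theorem bernoulli_multinomial_root_of_unity_sum' (k : ℕ) (hk : 1 ≤ k) :
    (bernoulli' (2 * k) : ℂ) =
      1 / (2 ^ (2 * k - 1) * ((2 : ℂ) ^ (2 * k) - 1)) *
        ∑ f ∈ Finset.Nat.antidiagonalTuple k k,
          (Nat.multinomial Finset.univ (fun i => 2 * f i) : ℂ) *
            Complex.exp (2 * Real.pi * Complex.I / k) ^ (∑ i : Fin k, ((i : ℕ) + 1) * f i) := by
  have hw := isPrimitiveRoot_exp (2 * k) (by omega)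
  have hsq : exp (2 * Real.pi * I / (2 * k : ℕ)) ^ 2 = exp (2 * Real.pi * I / k) := by
    rw [← exp_nat_mul]
    push_cast
    field_simp
  have h2k : (2 : ℂ) ^ (2 * k) - 1 ≠ 0 := by
    rw [sub_ne_zero]
    exact_mod_cast (Nat.one_lt_two_pow (by omega)).ne'
  rw [← hsq, sum_multinomial_mul_pow_eq_bernoulli' (by omega) hw]
  field_simp
end

section
/- For every integer d ≥ 1, the Euler number E_{2d} satisfies E_{2d} = 2^{2d} (2d)! · Σ_{μ ⊢ d} (1/z_μ) · ((−1)^{ℓ(μ)} / 2^{ℓ(μ)}) · ( ∏_{j=1}^{ℓ(μ)} (2^{2μ_j} − 1) ) · ∏_{j=1}^{ℓ(μ)} B_{2μ_j}/(2μ_j)!, where the sum is over all partitions μ of d. -/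
/-! `tanh = -(log sech)'` and `t tanh t = t + B(4t) - B(2t)`, where `B(t) = t / (e^t - 1)`
generates the Bernoulli numbers; hence `sech t = exp (∑ w_k t^{2k})` with `w_k = logSechCoeff k`.
Expanding the exponential, `[t^{2d}] sech t = ∑_{μ ⊢ d} ∏ w_{μ_j} / ∏ m_i(μ)!`, and
`∏ μ_j · ∏ m_i(μ)! = z_μ`. Instead of composing power series, both sides are shown to solve the
recurrence `d f_d = ∑ k w_k f_{d-k}`, `f_0 = 1`: for `sech` it comes from `sech' = -sech · tanh`,
for the partition sums from `F' = G' F` when `F = exp G`. -/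

open Finset

noncomputable section

open Nat

theorem Multiset.prod_factorial_count_cons {α : Type*} [DecidableEq α] (s : Multiset α) (a : α) :
    ∏ i ∈ (a ::ₘ s).toFinset, ((a ::ₘ s).count i)!
      = (s.count a + 1) * ∏ i ∈ s.toFinset, (s.count i)! := by
  have ha : a ∈ (a ::ₘ s).toFinset := by simp
  have hsub : s.toFinset ⊆ (a ::ₘ s).toFinset :=
    Multiset.toFinset_subset.mpr (Multiset.subset_cons _ _)
  rw [prod_subset hsub (f := fun i => (s.count i)!) fun i _ hi => by
      simp [Multiset.count_eq_zero.mpr (Multiset.mem_toFinset.not.mp hi)],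
    ← mul_prod_erase _ _ ha, ← mul_prod_erase _ (fun i => (s.count i)!) ha,
    Multiset.count_cons_self, factorial_succ, mul_assoc]
  congr 2
  exact prod_congr rfl fun i hi => by rw [Multiset.count_cons_of_ne (ne_of_mem_erase hi)]

section PartitionSum

variable {K : Type*} [Field K] [CharZero K]

def partitionWeight {α : Type*} [DecidableEq α] (w : α → K) (s : Multiset α) : K :=
  (s.map w).prod / ∏ i ∈ s.toFinset, ((s.count i)! : K)

/-- The coefficient of `x^d` in `exp (∑ k, w k * x^k)`. -/
def partitionSum (w : ℕ → K) (d : ℕ) : K :=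
  ∑ μ : d.Partition, partitionWeight w μ.parts

theorem count_add_one_mul_partitionWeight_cons {α : Type*} [DecidableEq α] (w : α → K)
    (s : Multiset α) (a : α) :
    ((s.count a : K) + 1) * partitionWeight w (a ::ₘ s) = w a * partitionWeight w s := by
  have hcount : (∏ i ∈ (a ::ₘ s).toFinset, (((a ::ₘ s).count i)! : K))
      = ((s.count a : K) + 1) * ∏ i ∈ s.toFinset, ((s.count i)! : K) := by
    exact_mod_cast Multiset.prod_factorial_count_cons s a
  have hne : ∏ i ∈ s.toFinset, ((s.count i)! : K) ≠ 0 :=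
    prod_ne_zero_iff.mpr fun i _ => by exact_mod_cast (factorial_pos _).ne'
  rw [partitionWeight, partitionWeight, hcount, Multiset.map_cons, Multiset.prod_cons]
  field_simp

theorem sum_count_mul_partitionWeight (w : ℕ → K) {d k : ℕ} (hk : 1 ≤ k) (hkd : k ≤ d) :
    ∑ μ : d.Partition, (μ.parts.count k : K) * partitionWeight w μ.parts
      = w k * partitionSum w (d - k) := by
  rw [← Fintype.sum_subtype_add_sum_subtype (fun μ : d.Partition => k ∈ μ.parts),
    Fintype.sum_eq_zero (fun μ : {μ : d.Partition // k ∉ μ.parts} => _) fun μ => by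
      simp [Multiset.count_eq_zero.mpr μ.2],
    add_zero, ← (Nat.Partition.partitionWithPartEquiv hk hkd).symm.sum_comp, partitionSum,
    mul_sum]
  refine sum_congr rfl fun ν _ => ?_
  simpa using count_add_one_mul_partitionWeight_cons w ν.parts k

theorem Nat.Partition.sum_mul_count_eq {n : ℕ} (μ : n.Partition) :
    ∑ k ∈ Icc 1 n, k * μ.parts.count k = n := by
  have hsub : μ.parts.toFinset ⊆ Icc 1 n := fun i hi => by
    rw [Multiset.mem_toFinset] at hi
    exact mem_Icc.mpr ⟨μ.parts_pos hi, μ.le_of_mem_parts hi⟩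
  rw [← sum_subset hsub fun i _ hi => by simp [Multiset.count_eq_zero.mpr (by simpa using hi)]]
  conv_rhs => rw [← μ.parts_sum, Finset.sum_multiset_count]
  simp [mul_comm]

theorem natCast_mul_partitionSum (w : ℕ → K) (d : ℕ) :
    (d : K) * partitionSum w d = ∑ k ∈ Icc 1 d, (k : K) * w k * partitionSum w (d - k) := by
  have hd (μ : d.Partition) : (d : K) = ∑ k ∈ Icc 1 d, (k : K) * μ.parts.count k := by
    exact_mod_cast μ.sum_mul_count_eq.symm
  calc (d : K) * partitionSum w d
      = ∑ μ : d.Partition, ∑ k ∈ Icc 1 d,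
          (k : K) * (μ.parts.count k * partitionWeight w μ.parts) := by
        simp_rw [partitionSum, mul_sum, ← mul_assoc, ← sum_mul, ← hd]
    _ = ∑ k ∈ Icc 1 d,
          (k : K) * ∑ μ : d.Partition, μ.parts.count k * partitionWeight w μ.parts := by
        rw [sum_comm]; simp_rw [mul_sum]
    _ = ∑ k ∈ Icc 1 d, (k : K) * w k * partitionSum w (d - k) := sum_congr rfl fun k hk => by
        rw [sum_count_mul_partitionWeight w (mem_Icc.mp hk).1 (mem_Icc.mp hk).2, mul_assoc]

theorem partitionSum_zero (w : ℕ → K) : partitionSum w 0 = 1 := by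
  simp [partitionSum, partitionWeight]

theorem eq_partitionSum_of_recurrence (w f : ℕ → K) (h0 : f 0 = 1)
    (hrec : ∀ d : ℕ, 0 < d → (d : K) * f d = ∑ k ∈ Icc 1 d, (k : K) * w k * f (d - k))
    (d : ℕ) :
    f d = partitionSum w d := by
  induction d using Nat.strong_induction_on with
  | _ d ih =>
    rcases Nat.eq_zero_or_pos d with rfl | hd
    · rw [h0, partitionSum_zero]
    · refine mul_left_cancel₀ (Nat.cast_ne_zero.mpr hd.ne') ?_
      rw [hrec d hd, natCast_mul_partitionSum]
      exact sum_congr rfl fun k hk => by rw [ih (d - k) (by grind)]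

end PartitionSum

open PowerSeries

def twoCoshSeries : ℚ⟦X⟧ := mk fun n => (1 + (-1 : ℚ) ^ n) / n !

def twoSinhSeries : ℚ⟦X⟧ := mk fun n => (1 - (-1 : ℚ) ^ n) / n !

def sechSeries : ℚ⟦X⟧ := 2 * twoCoshSeries⁻¹

def tanhSeries : ℚ⟦X⟧ := mk fun n =>
  if Odd n then 2 ^ (n + 1) * (2 ^ (n + 1) - 1) * bernoulli' (n + 1) / (n + 1)! else 0

theorem twoCoshSeries_eq : twoCoshSeries = exp ℚ + rescale (-1) (exp ℚ) := by
  ext n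
  simp only [twoCoshSeries, coeff_mk, map_add, coeff_rescale, coeff_exp, Algebra.algebraMap_self,
    RingHom.id_apply]
  ring

theorem twoSinhSeries_eq : twoSinhSeries = exp ℚ - rescale (-1) (exp ℚ) := by
  ext n
  simp only [twoSinhSeries, coeff_mk, map_sub, coeff_rescale, coeff_exp, Algebra.algebraMap_self,
    RingHom.id_apply]
  ring

theorem constantCoeff_twoCoshSeries : constantCoeff twoCoshSeries = 2 := by
  rw [← coeff_zero_eq_constantCoeff_apply, twoCoshSeries, coeff_mk]
  norm_num

theorem derivative_twoCoshSeries : d⁄dX ℚ twoCoshSeries = twoSinhSeries := by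
  ext n
  rw [coeff_derivative, twoCoshSeries, twoSinhSeries, coeff_mk, coeff_mk, factorial_succ]
  push_cast
  field_simp
  ring

theorem sechSeries_mul_twoCoshSeries : sechSeries * twoCoshSeries = 2 := by
  rw [sechSeries, mul_assoc, PowerSeries.inv_mul_cancel _ (by simp [constantCoeff_twoCoshSeries]),
    mul_one]

theorem coeff_zero_sechSeries : coeff 0 sechSeries = 1 := by
  rw [coeff_zero_eq_constantCoeff_apply, sechSeries, map_mul, constantCoeff_inv,
    constantCoeff_twoCoshSeries]
  norm_num [map_ofNat]

-- `tanh t = 1 - 2 / (e^{2t} + 1)` and `2 / (e^{2t} + 1) = 2 / (e^{2t} - 1) - 4 / (e^{4t} - 1)`.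
theorem X_mul_tanhSeries : X * tanhSeries
    = X + rescale 4 (bernoulliPowerSeries ℚ) - rescale 2 (bernoulliPowerSeries ℚ) := by
  ext (_ | n)
  · rw [coeff_zero_X_mul]
    simp [bernoulliPowerSeries, coeff_rescale, -coeff_zero_eq_constantCoeff]
  rw [coeff_succ_X_mul]
  simp only [tanhSeries, bernoulliPowerSeries, coeff_mk, map_add, map_sub, coeff_rescale, coeff_X,
    Algebra.algebraMap_self, RingHom.id_apply]
  rcases Nat.even_or_odd n with hn | hn
  · rw [if_neg (Nat.not_odd_iff_even.mpr hn)]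
    rcases Nat.eq_zero_or_pos n with rfl | hpos
    · norm_num
    · rw [bernoulli_eq_zero_of_odd hn.add_one (by omega), if_neg (by omega)]
      ring
  · rw [if_pos hn, if_neg (by grind), bernoulli_eq_bernoulli'_of_ne_one (by grind),
      show (4 : ℚ) = 2 * 2 by norm_num, mul_pow]
    ring

theorem rescale_bernoulliPowerSeries_mul_exp_pow_sub_one (k : ℕ) :
    rescale (k : ℚ) (bernoulliPowerSeries ℚ) * (exp ℚ ^ k - 1) = (k : ℚ⟦X⟧) * X := by
  simpa [← exp_pow_eq_rescale_exp, rescale_X, map_natCast] using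
    congrArg (rescale (k : ℚ)) (bernoulliPowerSeries_mul_exp_sub_one ℚ)

theorem tanhSeries_mul_twoCoshSeries : tanhSeries * twoCoshSeries = twoSinhSeries := by
  set E := exp ℚ
  set E' := rescale (-1) E
  have hEE' : E * E' = 1 := by simpa [evalNegHom] using exp_mul_exp_neg_eq_one (A := ℚ)
  have h2 := rescale_bernoulliPowerSeries_mul_exp_pow_sub_one 2
  have h4 := rescale_bernoulliPowerSeries_mul_exp_pow_sub_one 4
  push_cast at h2 h4
  have hE : E ≠ 0 := fun h => by simp [h] at hEE'
  have h2X : (2 : ℚ⟦X⟧) * X ≠ 0 := mul_ne_zero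
    (by simpa [map_ofNat] using (C_injective (R := ℚ)).ne (two_ne_zero (α := ℚ))) X_ne_zero
  have hE2 : E ^ 2 - 1 ≠ 0 := right_ne_zero_of_mul (h2 ▸ h2X)
  -- multiplied by `t (e^{2t} - 1) e^t`, the claim reads `t tanh t (e^{4t} - 1) = t (e^{2t} - 1)^2`
  refine mul_left_cancel₀ (mul_ne_zero (mul_ne_zero X_ne_zero hE2) hE) ?_
  rw [twoCoshSeries_eq, twoSinhSeries_eq]
  linear_combination (E ^ 4 - 1) * X_mul_tanhSeries + h4 - (E ^ 2 + 1) * h2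
    + X * (E ^ 2 - 1) * (tanhSeries + 1) * hEE'

theorem derivative_sechSeries : d⁄dX ℚ sechSeries = -(sechSeries * tanhSeries) := by
  have hC : twoCoshSeries ≠ 0 := fun h => by simpa [h] using constantCoeff_twoCoshSeries
  have h := congrArg (d⁄dX ℚ) sechSeries_mul_twoCoshSeries
  rw [Derivation.leibniz, derivative_twoCoshSeries, ← tanhSeries_mul_twoCoshSeries, smul_eq_mul,
    smul_eq_mul, show (2 : ℚ⟦X⟧) = C (2 : ℚ) from (map_ofNat C 2).symm, derivative_C] at h
  refine mul_right_cancel₀ hC ?_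
  linear_combination h

theorem coeff_two_mul_sub_one_mul_tanhSeries (f : ℚ⟦X⟧) {d : ℕ} (hd : 0 < d) :
    coeff (2 * d - 1) (f * tanhSeries)
      = ∑ k ∈ Icc 1 d, coeff (2 * (d - k)) f * coeff (2 * k - 1) tanhSeries := by
  rw [coeff_mul]
  symm
  refine sum_of_injOn (fun k => (2 * (d - k), 2 * k - 1)) ?_ ?_ ?_ (fun _ _ => rfl)
  · intro a ha b hb hab
    simp only [Prod.mk.injEq] at hab
    grind
  · intro k hk
    simp only [coe_Icc, Set.mem_Icc] at hk
    simp only [mem_coe, HasAntidiagonal.mem_antidiagonal]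
    omega
  · rintro ⟨i, j⟩ hij hnot
    rw [HasAntidiagonal.mem_antidiagonal] at hij
    have hj : ¬ Odd j := by
      rintro ⟨k, rfl⟩
      exact hnot ⟨k + 1, by simp only [coe_Icc, Set.mem_Icc]; omega,
        by simp only [Prod.mk.injEq]; omega⟩
    simp [tanhSeries, hj]

-- The coefficient of `t^{2k}` in `log sech t = -∫ tanh`.
def logSechCoeff (k : ℕ) : ℚ :=
  -(2 ^ (2 * k) * (2 ^ (2 * k) - 1) * bernoulli' (2 * k)) / (2 * k * (2 * k)!)

theorem coeff_two_mul_sub_one_tanhSeries {k : ℕ} (hk : 0 < k) :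
    coeff (2 * k - 1) tanhSeries = -(2 * k) * logSechCoeff k := by
  have hk' : (k : ℚ) ≠ 0 := by positivity
  rw [tanhSeries, coeff_mk, if_pos ⟨k - 1, by omega⟩, Nat.sub_add_cancel (by omega),
    logSechCoeff]
  field_simp

theorem natCast_mul_coeff_two_mul_sechSeries {d : ℕ} (hd : 0 < d) :
    (d : ℚ) * coeff (2 * d) sechSeries
      = ∑ k ∈ Icc 1 d, (k : ℚ) * logSechCoeff k * coeff (2 * (d - k)) sechSeries := by
  have h := congrArg (coeff (2 * d - 1)) derivative_sechSeries
  have hcast : ((2 * d - 1 : ℕ) : ℚ) + 1 = 2 * d := by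
    rw [Nat.cast_sub (by omega)]
    push_cast
    ring
  rw [coeff_derivative, Nat.sub_add_cancel (by omega), hcast, map_neg,
    coeff_two_mul_sub_one_mul_tanhSeries _ hd] at h
  have hsum : ∑ k ∈ Icc 1 d, coeff (2 * (d - k)) sechSeries * coeff (2 * k - 1) tanhSeries
      = -2 * ∑ k ∈ Icc 1 d, (k : ℚ) * logSechCoeff k * coeff (2 * (d - k)) sechSeries := by
    rw [mul_sum]
    exact sum_congr rfl fun k hk => by
      rw [coeff_two_mul_sub_one_tanhSeries (mem_Icc.mp hk).1]
      ring
  linear_combination h / 2 - hsum / 2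

theorem coeff_two_mul_sechSeries (d : ℕ) :
    coeff (2 * d) sechSeries = partitionSum logSechCoeff d :=
  eq_partitionSum_of_recurrence logSechCoeff (fun d => coeff (2 * d) sechSeries)
    coeff_zero_sechSeries (fun _ hd => natCast_mul_coeff_two_mul_sechSeries hd) d

theorem prod_map_logSechCoeff (s : Multiset ℕ) :
    (s.map logSechCoeff).prod
      = (-1 / 2) ^ s.card * ((s.prod : ℕ) : ℚ)⁻¹ * 2 ^ (2 * s.sum)
        * (s.map fun p => (2 : ℚ) ^ (2 * p) - 1).prod
        * (s.map fun p => bernoulli' (2 * p) / ((2 * p)! : ℚ)).prod := by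
  induction s using Multiset.induction_on with
  | empty => simp
  | cons p s ih =>
    simp only [Multiset.map_cons, Multiset.prod_cons, Multiset.card_cons, Multiset.sum_cons, ih,
      logSechCoeff, mul_add, pow_add, pow_succ, Nat.cast_mul, mul_inv]
    push_cast
    ring

theorem natCast_zPart {d : ℕ} (μ : d.Partition) :
    (zPart μ : ℚ)
      = (μ.parts.prod : ℚ) * ∏ i ∈ μ.parts.toFinset, ((μ.parts.count i)! : ℚ) := by
  rw [zPart, prod_mul_distrib, ← prod_multiset_count]
  push_cast
  rfl

theorem partitionWeight_logSechCoeff {d : ℕ} (μ : d.Partition) :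
    partitionWeight logSechCoeff μ.parts = 2 ^ (2 * d) *
      ((1 / (zPart μ : ℚ)) * ((-1 : ℚ) ^ μ.parts.card / 2 ^ μ.parts.card) *
        (μ.parts.map fun p => (2 : ℚ) ^ (2 * p) - 1).prod *
        (μ.parts.map fun p => bernoulli' (2 * p) / ((2 * p)! : ℚ)).prod) := by
  rw [partitionWeight, prod_map_logSechCoeff, μ.parts_sum, natCast_zPart, div_pow]
  field_simp

theorem euler_number_as_sum_of_bernoulli_general (d : ℕ) :
    eulerNumber (2 * d) =
      2 ^ (2 * d) * ((2 * d).factorial : ℚ) *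
        ∑ μ : Nat.Partition d,
          (1 / (zPart μ : ℚ)) * ((-1 : ℚ) ^ μ.parts.card / 2 ^ μ.parts.card) *
            (μ.parts.map fun p => ((2 : ℚ) ^ (2 * p) - 1)).prod *
            (μ.parts.map fun p => bernoulli' (2 * p) / ((2 * p).factorial : ℚ)).prod := by
  calc eulerNumber (2 * d) = (2 * d)! * coeff (2 * d) sechSeries := rfl
    _ = (2 * d)! * ∑ μ : d.Partition, partitionWeight logSechCoeff μ.parts := by
      rw [coeff_two_mul_sechSeries, partitionSum]
    _ = _ := by
      simp_rw [partitionWeight_logSechCoeff, ← mul_sum]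
      ring

/-- **Formula (4.7)**: for every `d ≥ 1`, the Euler number `E_{2d}` is the following
sum of products of Bernoulli numbers:
`E_{2d} = 2^{2d}(2d)! Σ_{μ ⊢ d} (1/z_μ) ((-1)^{ℓ(μ)}/2^{ℓ(μ)})
(∏_j (2^{2μ_j}-1)) ∏_j B_{2μ_j}/(2μ_j)!`. -/
theorem euler_number_as_sum_of_bernoulli (d : ℕ) (hd : 1 ≤ d) :
    eulerNumber (2 * d) =
      2 ^ (2 * d) * ((2 * d).factorial : ℚ) *
        ∑ μ : Nat.Partition d,
          (1 / (zPart μ : ℚ)) * ((-1 : ℚ) ^ μ.parts.card / 2 ^ μ.parts.card) *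
            (μ.parts.map fun p => ((2 : ℚ) ^ (2 * p) - 1)).prod *
            (μ.parts.map fun p => bernoulli' (2 * p) / ((2 * p).factorial : ℚ)).prod :=
  euler_number_as_sum_of_bernoulli_general d

end
end
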